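/- arXiv:1106.1835 — 7 statements merged into one kernel-verified Lean document; each statement's English description precedes it below -/
import Mathlib

section
/- Let N ≥ 1 be an integer and 0 < α < 1, 0 < β < 1. Define D₁ = 1 + αβ/(1−α) and η = β/((1−α)D₁) (so that (1−α)η/β = (1−η)/(1−β) = D₁⁻¹ and 0 < η < 1). Then the distribution φ₀(i) = b(i;N;η) satisfies the detailed-balance (reversibility) condition K(i,j)·φ₀(j) = K(j,i)·φ₀(i) for all integers 0 ≤ i, j ≤ N. -/
/-- The binomial distribution `b(k;n;p) = C(n,k) p^k (1-p)^(n-k)`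
(automatically `0` when `k > n` since `C(n,k) = 0`). -/
noncomputable def binom (n k : ℕ) (p : ℝ) : ℝ :=
  (n.choose k : ℝ) * p ^ k * (1 - p) ^ (n - k)

/-- One-variable cumulative Bernoulli trial transition kernel on `{0,…,N}`:
`K(j,i) = ∑_{k=0}^{min(i,j)} b(k;i;α) b(j-k;N-k;β)`, the probability of moving
from state `i` to state `j`. -/
noncomputable def K1 (N : ℕ) (α β : ℝ) (j i : ℕ) : ℝ :=
  ∑ k ∈ Finset.range (min i j + 1), binom i k α * binom (N - k) (j - k) β

/-!
Detailed balance holds term by term in the sum defining `K1`. Since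
`C(N,j) C(j,k) = C(N,k) C(N-k,j-k)`, the binomial coefficients of the `k`-th term of
`K(i,j) φ₀(j)` are `C(N,k) C(N-k,i-k) C(N-k,j-k)`, symmetric in `i` and `j`. Its powers of
`1-α, β, 1-β, η, 1-η` depend on `j` through `((1-α)η/(1-η))^j` and on `i` through
`(β/(1-β))^i`, so they are symmetric as soon as `(1-α)η(1-β) = β(1-η)`, and this is exactly
what the choice of `η` achieves.
-/

theorem Nat.choose_mul_choose_mul_choose_comm {N i j k : ℕ} (hki : k ≤ i) (hkj : k ≤ j) :
    j.choose k * (N - k).choose (i - k) * N.choose j =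
      i.choose k * (N - k).choose (j - k) * N.choose i := by
  have hj' := Nat.choose_mul (n := N) hkj
  have hi' := Nat.choose_mul (n := N) hki
  calc j.choose k * (N - k).choose (i - k) * N.choose j
      = N.choose j * j.choose k * (N - k).choose (i - k) := by ring
    _ = N.choose i * i.choose k * (N - k).choose (j - k) := by rw [hj', hi']; ring
    _ = i.choose k * (N - k).choose (j - k) * N.choose i := by ring

theorem pow_mul_pow_detailed_balance {M : Type*} [CommMonoid M] {x y u e f : M}
    (h : x * e * u = y * f) {N i j k : ℕ} (hki : k ≤ i) (hkj : k ≤ j)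
    (hi : i ≤ N) (hj : j ≤ N) :
    x ^ (j - k) * y ^ (i - k) * u ^ (N - i) * e ^ j * f ^ (N - j) =
      x ^ (i - k) * y ^ (j - k) * u ^ (N - j) * e ^ i * f ^ (N - i) := by
  wlog hij : i ≤ j generalizing i j
  · exact (this hkj hki hj hi (by omega)).symm
  obtain ⟨a, rfl⟩ := Nat.exists_eq_add_of_le hki
  obtain ⟨t, rfl⟩ := Nat.exists_eq_add_of_le hij
  obtain ⟨c, rfl⟩ := Nat.exists_eq_add_of_le hj
  rw [show k + a + t - k = a + t by omega, show k + a - k = a by omega,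
    show k + a + t + c - (k + a) = c + t by omega, show k + a + t + c - (k + a + t) = c by omega]
  calc x ^ (a + t) * y ^ a * u ^ (c + t) * e ^ (k + a + t) * f ^ c
      = (x ^ a * y ^ a * u ^ c * e ^ (k + a) * f ^ c) * (x * e * u) ^ t := by
        simp only [pow_add, mul_pow]; ac_rfl
    _ = (x ^ a * y ^ a * u ^ c * e ^ (k + a) * f ^ c) * (y * f) ^ t := by rw [h]
    _ = x ^ a * y ^ (a + t) * u ^ c * e ^ (k + a) * f ^ (c + t) := by
        simp only [pow_add, mul_pow]; ac_rfl

theorem binom_mul_binom_mul_binom_comm {α β η : ℝ} (h : (1 - α) * η * (1 - β) = β * (1 - η))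
    {N i j k : ℕ} (hki : k ≤ i) (hkj : k ≤ j) (hi : i ≤ N) (hj : j ≤ N) :
    binom j k α * binom (N - k) (i - k) β * binom N j η =
      binom i k α * binom (N - k) (j - k) β * binom N i η := by
  have hchoose : (j.choose k * (N - k).choose (i - k) * N.choose j : ℝ) =
      i.choose k * (N - k).choose (j - k) * N.choose i := by
    exact_mod_cast Nat.choose_mul_choose_mul_choose_comm hki hkj
  have hpow := pow_mul_pow_detailed_balance h hki hkj hi hj
  simp only [binom, show N - k - (i - k) = N - i by omega, show N - k - (j - k) = N - j by omega]
  calc _ = (j.choose k * (N - k).choose (i - k) * N.choose j : ℝ) * α ^ k *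
        ((1 - α) ^ (j - k) * β ^ (i - k) * (1 - β) ^ (N - i) * η ^ j * (1 - η) ^ (N - j)) := by
        ring
    _ = (i.choose k * (N - k).choose (j - k) * N.choose i : ℝ) * α ^ k *
        ((1 - α) ^ (i - k) * β ^ (j - k) * (1 - β) ^ (N - j) * η ^ i * (1 - η) ^ (N - i)) := by
        rw [hchoose, hpow]
    _ = _ := by ring

theorem K1_mul_binom_comm {N : ℕ} {α β η : ℝ} (h : (1 - α) * η * (1 - β) = β * (1 - η))
    {i j : ℕ} (hi : i ≤ N) (hj : j ≤ N) :
    K1 N α β i j * binom N j η = K1 N α β j i * binom N i η := by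
  simp only [K1, Finset.sum_mul, min_comm j i]
  refine Finset.sum_congr rfl fun k hk => ?_
  rw [Finset.mem_range] at hk
  exact binom_mul_binom_mul_binom_comm h (by omega) (by omega) hi hj

theorem stmt_0_general (N : ℕ) (α β : ℝ)
    (hα0 : 0 < α) (hα1 : α < 1) (hβ0 : 0 < β)
    (D₁ : ℝ) (hD : D₁ = 1 + α * β / (1 - α))
    (η : ℝ) (hη : η = β / ((1 - α) * D₁)) :
    ∀ i j : ℕ, i ≤ N → j ≤ N →
      K1 N α β i j * binom N j η = K1 N α β j i * binom N i η := by
  have hα : 1 - α ≠ 0 := by linarith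
  have hs : 1 - α + α * β ≠ 0 := by nlinarith
  have hD' : (1 - α) * D₁ = 1 - α + α * β := by rw [hD]; field_simp
  have hbalance : (1 - α) * η * (1 - β) = β * (1 - η) := by
    rw [hη, hD']; field_simp; ring
  exact fun i j hi hj => K1_mul_binom_comm hbalance hi hj

/-- Detailed balance (reversibility) of `φ₀(i) = b(i;N;η)` for the one-variable
cumulative Bernoulli trial kernel. -/
theorem stmt_0 (N : ℕ) (hN : 1 ≤ N) (α β : ℝ)
    (hα0 : 0 < α) (hα1 : α < 1) (hβ0 : 0 < β) (hβ1 : β < 1)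
    (D₁ : ℝ) (hD : D₁ = 1 + α * β / (1 - α))
    (η : ℝ) (hη : η = β / ((1 - α) * D₁)) :
    ∀ i j : ℕ, i ≤ N → j ≤ N →
      K1 N α β i j * binom N j η = K1 N α β j i * binom N i η :=
  stmt_0_general N α β hα0 hα1 hβ0 D₁ hD η hη
end

section
/- Let N ≥ 1 be an integer and 0 < α < 1, 0 < β < 1. Define D₁ = 1 + αβ/(1−α) and η = β/((1−α)D₁). Then φ₀(i) = b(i;N;η) is a stationary distribution of the kernel K, i.e. Σ_{j=0}^N K(i,j)·φ₀(j) = φ₀(i) for all 0 ≤ i ≤ N. -/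
open Finset

lemma binom_eq_zero_of_lt {n k : ℕ} (h : n < k) (p : ℝ) : binom n k p = 0 := by
  simp [binom, Nat.choose_eq_zero_of_lt h]

lemma cast_choose_mul_choose (n k s : ℕ) (hsk : s ≤ k) :
    (n.choose k * k.choose s : ℝ) = n.choose s * (n - s).choose (k - s) := by
  exact_mod_cast Nat.choose_mul hsk

lemma sum_binom_mul_binom_eq_binom_mul {N k : ℕ} (hk : k ≤ N) (α η : ℝ) :
    ∑ j ∈ range (N + 1), binom j k α * binom N j η = binom N k (α * η) := by
  have hlow : ∑ j ∈ range k, binom j k α * binom N j η = 0 :=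
    sum_eq_zero fun j hj => by rw [binom_eq_zero_of_lt (mem_range.1 hj), zero_mul]
  rw [show N + 1 = k + (N - k + 1) by omega, sum_range_add, hlow, zero_add, binom,
    show 1 - α * η = (1 - α) * η + (1 - η) by ring, add_pow, mul_sum]
  refine sum_congr rfl fun m hm => ?_
  have hm : m ≤ N - k := Nat.lt_succ_iff.1 (mem_range.1 hm)
  have hchoose := cast_choose_mul_choose N (k + m) k (Nat.le_add_right k m)
  simp only [binom, Nat.add_sub_cancel_left, Nat.sub_sub] at hchoose ⊢
  rw [pow_add, mul_pow, mul_pow]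
  linear_combination (α ^ k * (1 - α) ^ m * η ^ k * η ^ m * (1 - η) ^ (N - (k + m))) * hchoose

lemma sum_binom_sub_mul_binom {N i : ℕ} (hi : i ≤ N) (p β : ℝ) :
    ∑ k ∈ range (i + 1), binom (N - k) (i - k) β * binom N k p = binom N i (p + β * (1 - p)) := by
  rw [binom, show 1 - (p + β * (1 - p)) = (1 - β) * (1 - p) by ring, add_pow, mul_sum, sum_mul]
  refine sum_congr rfl fun k hk => ?_
  have hk : k ≤ i := Nat.lt_succ_iff.1 (mem_range.1 hk)
  have hchoose := cast_choose_mul_choose N i k hk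
  have hpow : (1 - p) ^ (N - k) = (1 - p) ^ (i - k) * (1 - p) ^ (N - i) := by
    rw [← pow_add]; congr 1; omega
  simp only [binom, show N - k - (i - k) = N - i by omega, hpow, mul_pow]
  linear_combination (-(β ^ (i - k) * (1 - β) ^ (N - i) * p ^ k *
    (1 - p) ^ (i - k) * (1 - p) ^ (N - i))) * hchoose

lemma K1_eq_sum_range (N : ℕ) (α β : ℝ) (i j : ℕ) :
    K1 N α β i j = ∑ k ∈ range (i + 1), binom j k α * binom (N - k) (i - k) β := by
  refine sum_subset (range_subset_range.2 (by omega)) fun k hk hk' => ?_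
  rw [mem_range] at hk hk'
  rw [binom_eq_zero_of_lt (by omega), zero_mul]

lemma sum_K1_mul (N : ℕ) (α β : ℝ) (i : ℕ) (s : Finset ℕ) (f : ℕ → ℝ) :
    ∑ j ∈ s, K1 N α β i j * f j
      = ∑ k ∈ range (i + 1), binom (N - k) (i - k) β * ∑ j ∈ s, binom j k α * f j := by
  simp only [K1_eq_sum_range, sum_mul, mul_sum]
  rw [sum_comm]
  refine sum_congr rfl fun k _ => sum_congr rfl fun j _ => ?_
  ring

theorem stmt_1_general (N : ℕ) (α β : ℝ)
    (hα0 : 0 < α) (hα1 : α < 1) (hβ0 : 0 < β)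
    (D₁ : ℝ) (hD : D₁ = 1 + α * β / (1 - α))
    (η : ℝ) (hη : η = β / ((1 - α) * D₁)) :
    ∀ i : ℕ, i ≤ N →
      ∑ j ∈ Finset.range (N + 1), K1 N α β i j * binom N j η = binom N i η := by
  intro i hi
  have hden : (1 - α) * D₁ = 1 - α + α * β := by
    rw [hD]; field_simp [(sub_pos.2 hα1).ne']
  have hfixed : α * η + β * (1 - α * η) = η := by
    have hpos : 0 < 1 - α + α * β := by linarith [mul_pos hα0 hβ0]
    rw [hη, hden]; field_simp; ring
  calc ∑ j ∈ range (N + 1), K1 N α β i j * binom N j η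
      = ∑ k ∈ range (i + 1), binom (N - k) (i - k) β * binom N k (α * η) := by
        rw [sum_K1_mul]
        refine sum_congr rfl fun k hk => ?_
        rw [sum_binom_mul_binom_eq_binom_mul (by rw [mem_range] at hk; omega)]
    _ = binom N i η := by rw [sum_binom_sub_mul_binom hi, hfixed]

/-- `φ₀(i) = b(i;N;η)` is a stationary distribution of the one-variable
cumulative Bernoulli trial kernel: `∑_{j=0}^N K(i,j) φ₀(j) = φ₀(i)`. -/
theorem stmt_1 (N : ℕ) (hN : 1 ≤ N) (α β : ℝ)
    (hα0 : 0 < α) (hα1 : α < 1) (hβ0 : 0 < β) (hβ1 : β < 1)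
    (D₁ : ℝ) (hD : D₁ = 1 + α * β / (1 - α))
    (η : ℝ) (hη : η = β / ((1 - α) * D₁)) :
    ∀ i : ℕ, i ≤ N →
      ∑ j ∈ Finset.range (N + 1), K1 N α β i j * binom N j η = binom N i η :=
  stmt_1_general N α β hα0 hα1 hβ0 D₁ hD η hη
end

section
/- Let N ≥ 1 be an integer and 0 < α < 1, 0 < β < 1. Define D₁ = 1 + αβ/(1−α) and η = β/((1−α)D₁). For each integer 0 ≤ k ≤ N, the function ψ_k(i) := b(i;N;η)·₂F₁(−i,−k;−N;η⁻¹) is an eigenfunction of the kernel K with eigenvalue λ_k = α^k(1−β)^k, i.e. Σ_{j=0}^N K(i,j)·ψ_k(j) = α^k(1−β)^k·ψ_k(i) for all 0 ≤ i ≤ N. -/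
/-- The Pochhammer symbol `(a)ᵣ = a(a+1)⋯(a+r-1)`. -/
noncomputable def poch (a : ℝ) (r : ℕ) : ℝ := Polynomial.eval a (ascPochhammer ℝ r)

/-- The terminating hypergeometric sum (Krawtchouk polynomial)
`₂F₁(-i,-k;-N;z) = ∑_{r=0}^{min(i,k)} (-i)ᵣ(-k)ᵣ/((-N)ᵣ r!) zʳ`. -/
noncomputable def hyp2F1 (i k N : ℕ) (z : ℝ) : ℝ :=
  ∑ r ∈ Finset.range (min i k + 1),
    poch (-(i : ℝ)) r * poch (-(k : ℝ)) r / (poch (-(N : ℝ)) r * (r.factorial : ℝ)) * z ^ r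

/-!
The balance identity `η (1 - α) (1 - β) = (1 - η) β` makes `b(·;N;η)` a reversible measure for `K`,
so it suffices that `j ↦ ₂F₁(-j,-k;-N;z)`, `z = η⁻¹`, is a right eigenfunction of `K`.
Summed against `C(N,k) wᵏ`, these functions give `(1 + w)^(N-j) (1 + w (1 - z))^j`, and because
`β z = 1 - α (1 - β)`, the kernel maps this generating function at `w` to the one at `α (1 - β) w`.
Comparing coefficients of `wᵏ` yields the eigenvalue `(α (1 - β))ᵏ`.
-/

open Finset

lemma poch_neg_natCast (n r : ℕ) :
    poch (-(n : ℝ)) r = (-1) ^ r * r.factorial * n.choose r := by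
  rw [poch, ascPochhammer_eval_neg_eq_descPochhammer, descPochhammer_eval_eq_descFactorial,
    Nat.descFactorial_eq_factorial_mul_choose]
  push_cast
  ring

-- Terms with `N < r` have a zero denominator on both sides (`x / 0 = 0`).
lemma hyp2F1_eq_sum_choose (j k N : ℕ) (z : ℝ) :
    hyp2F1 j k N z
      = ∑ r ∈ range (min j k + 1), j.choose r * k.choose r / N.choose r * (-z) ^ r := by
  refine sum_congr rfl fun r _ => ?_
  have hfact : (r.factorial : ℝ) ≠ 0 := by positivity
  simp only [poch_neg_natCast, neg_pow z r]
  rcases eq_or_ne (N.choose r : ℝ) 0 with hN | hN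
  · simp [hN]
  · field_simp

lemma sum_range_sum_range_min {M : Type*} [AddCommMonoid M] {i N : ℕ} (hi : i ≤ N)
    (f : ℕ → ℕ → M) :
    ∑ j ∈ range (N + 1), ∑ m ∈ range (min i j + 1), f m j
      = ∑ m ∈ range (i + 1), ∑ t ∈ range (N - m + 1), f m (m + t) := by
  rw [sum_comm' (t' := range (i + 1)) (s' := fun m => Ico m (N + 1))]
  · refine sum_congr rfl fun m hm => ?_
    rw [sum_Ico_eq_sum_range, Nat.sub_add_comm (by grind)]
  · intro j m
    simp only [mem_range, mem_Ico]
    omega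

lemma sum_binom_mul_pow_mul_pow (n : ℕ) (p A B : ℝ) :
    ∑ t ∈ range (n + 1), binom n t p * (A ^ (n - t) * B ^ t) = ((1 - p) * A + p * B) ^ n := by
  rw [add_comm ((1 - p) * A), add_pow]
  refine sum_congr rfl fun t _ => ?_
  rw [binom, mul_pow, mul_pow]
  ring

lemma sum_K1_mul_pow_mul_pow {N i : ℕ} (hi : i ≤ N) (α β A B : ℝ) :
    ∑ j ∈ range (N + 1), K1 N α β j i * (A ^ (N - j) * B ^ j)
      = ((1 - β) * A + β * B) ^ (N - i)
        * ((1 - α) * ((1 - β) * A + β * B) + α * B) ^ i := by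
  set C := (1 - β) * A + β * B
  have hstep : ∀ m ∈ range (i + 1),
      ∑ t ∈ range (N - m + 1),
          binom i m α * binom (N - m) (m + t - m) β * (A ^ (N - (m + t)) * B ^ (m + t))
        = C ^ (N - i) * (binom i m α * (C ^ (i - m) * B ^ m)) := by
    intro m hm
    have hmi : m ≤ i := Nat.lt_succ_iff.mp (mem_range.mp hm)
    calc _ = binom i m α * B ^ m
              * ∑ t ∈ range (N - m + 1), binom (N - m) t β * (A ^ (N - m - t) * B ^ t) := by
          rw [mul_sum]
          refine sum_congr rfl fun t _ => ?_
          rw [Nat.add_sub_cancel_left, Nat.sub_add_eq, pow_add]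
          ring
      _ = binom i m α * B ^ m * C ^ ((N - i) + (i - m)) := by
          rw [sum_binom_mul_pow_mul_pow, Nat.sub_add_sub_cancel hi hmi]
      _ = _ := by ring
  simp only [K1, sum_mul]
  rw [sum_range_sum_range_min hi, sum_congr rfl hstep, ← mul_sum, sum_binom_mul_pow_mul_pow]

lemma sum_choose_mul_pow_mul_hyp2F1 {N j : ℕ} (hj : j ≤ N) (z w : ℝ) :
    ∑ k ∈ range (N + 1), (N.choose k : ℝ) * w ^ k * hyp2F1 j k N z
      = (1 + w) ^ (N - j) * (1 + w * (1 - z)) ^ j := by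
  have hstep : ∀ r ∈ range (j + 1),
      ∑ t ∈ range (N - r + 1), (N.choose (r + t) : ℝ) * w ^ (r + t)
          * (j.choose r * (r + t).choose r / N.choose r * (-z) ^ r)
        = (1 + w) ^ (N - j) * ((-z * w) ^ r * (1 + w) ^ (j - r) * j.choose r) := by
    intro r hr
    have hrj : r ≤ j := Nat.lt_succ_iff.mp (mem_range.mp hr)
    have hNr : (N.choose r : ℝ) ≠ 0 := by exact_mod_cast (Nat.choose_pos (hrj.trans hj)).ne'
    calc _ = (j.choose r : ℝ) * (-z * w) ^ r
              * ∑ t ∈ range (N - r + 1), w ^ t * 1 ^ (N - r - t) * (N - r).choose t := by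
          rw [mul_sum]
          refine sum_congr rfl fun t _ => ?_
          have hchoose : (N.choose (r + t) : ℝ) * (r + t).choose r
              = N.choose r * (N - r).choose t := by
            have h := Nat.choose_mul (n := N) (Nat.le_add_right r t)
            rw [Nat.add_sub_cancel_left] at h
            exact_mod_cast h
          rw [pow_add, mul_pow, one_pow]
          field_simp
          linear_combination (j.choose r : ℝ) * (-z) ^ r * w ^ r * w ^ t * hchoose
      _ = (j.choose r : ℝ) * (-z * w) ^ r * (1 + w) ^ ((N - j) + (j - r)) := by
          rw [← add_pow, add_comm w, Nat.sub_add_sub_cancel hj hrj]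
      _ = _ := by ring
  simp only [hyp2F1_eq_sum_choose, mul_sum]
  rw [sum_range_sum_range_min hj, sum_congr rfl hstep, ← mul_sum, ← add_pow]
  ring

lemma eq_of_forall_sum_mul_pow_eq {R : Type*} [CommRing R] [IsDomain R] [Infinite R]
    {n : ℕ} {a b : ℕ → R} (h : ∀ w, ∑ m ∈ range n, a m * w ^ m = ∑ m ∈ range n, b m * w ^ m)
    {m : ℕ} (hm : m < n) : a m = b m := by
  have hpoly : ∑ m ∈ range n, Polynomial.C (a m) * Polynomial.X ^ m
      = ∑ m ∈ range n, Polynomial.C (b m) * Polynomial.X ^ m :=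
    Polynomial.funext fun w => by simpa [Polynomial.eval_finsetSum] using h w
  simpa [Polynomial.finsetSum_coeff, Polynomial.coeff_C_mul_X_pow, hm]
    using congrArg (Polynomial.coeff · m) hpoly

lemma sum_K1_mul_hyp2F1 {N i k : ℕ} (hi : i ≤ N) (hk : k ≤ N) {α β z : ℝ}
    (hz : β * z = 1 - α * (1 - β)) :
    ∑ j ∈ range (N + 1), K1 N α β j i * hyp2F1 j k N z
      = (α * (1 - β)) ^ k * hyp2F1 i k N z := by
  have hNk : (N.choose k : ℝ) ≠ 0 := by exact_mod_cast (Nat.choose_pos hk).ne'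
  refine mul_left_cancel₀ hNk <| eq_of_forall_sum_mul_pow_eq (n := N + 1)
    (a := fun m => N.choose m * ∑ j ∈ range (N + 1), K1 N α β j i * hyp2F1 j m N z)
    (b := fun m => N.choose m * ((α * (1 - β)) ^ m * hyp2F1 i m N z))
    (fun w => ?_) (Nat.lt_succ_of_le hk)
  set w' := α * (1 - β) * w
  calc ∑ m ∈ range (N + 1), N.choose m * (∑ j ∈ range (N + 1), K1 N α β j i * hyp2F1 j m N z)
          * w ^ m
      = ∑ j ∈ range (N + 1), K1 N α β j i * ((1 + w) ^ (N - j) * (1 + w * (1 - z)) ^ j) := by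
        simp only [mul_sum, sum_mul]
        rw [sum_comm]
        refine sum_congr rfl fun j hj => ?_
        rw [← sum_choose_mul_pow_mul_hyp2F1 (Nat.lt_succ_iff.mp (mem_range.mp hj)), mul_sum]
        exact sum_congr rfl fun m _ => by ring
    _ = (1 + w') ^ (N - i) * (1 + w' * (1 - z)) ^ i := by
        rw [sum_K1_mul_pow_mul_pow hi]
        congr 2 <;> linear_combination (-w) * hz
    _ = ∑ m ∈ range (N + 1), N.choose m * ((α * (1 - β)) ^ m * hyp2F1 i m N z) * w ^ m := by
        rw [← sum_choose_mul_pow_mul_hyp2F1 hi]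
        refine sum_congr rfl fun m _ => ?_
        rw [mul_pow]
        ring

lemma pow_mul_pow_mul_pow_mul_pow_comm {R : Type*} [CommMonoid R] {x y u v : R}
    (h : x * v = y * u) {a b n : ℕ} (ha : a ≤ n) (hb : b ≤ n) :
    x ^ a * y ^ (n - a) * u ^ b * v ^ (n - b) = x ^ b * y ^ (n - b) * u ^ a * v ^ (n - a) := by
  wlog hab : a ≤ b generalizing a b
  · exact (this hb ha (le_of_not_ge hab)).symm
  obtain ⟨d, rfl⟩ := exists_add_of_le hab
  rw [show n - a = n - (a + d) + d by omega, pow_add x, pow_add y, pow_add u, pow_add v]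
  calc _ = x ^ a * y ^ (n - (a + d)) * u ^ a * v ^ (n - (a + d)) * (y * u) ^ d := by
        rw [mul_pow]; ac_rfl
    _ = _ := by rw [← h, mul_pow]; ac_rfl

lemma binom_mul_binom_mul_binom (N i : ℕ) {j m : ℕ} (hmj : m ≤ j) (α β η : ℝ) :
    binom N j η * (binom j m α * binom (N - m) (i - m) β)
      = N.choose m * (N - m).choose (j - m) * (N - m).choose (i - m) * (α * η) ^ m
        * ((η * (1 - α)) ^ (j - m) * (1 - η) ^ (N - m - (j - m))
          * β ^ (i - m) * (1 - β) ^ (N - m - (i - m))) := by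
  obtain ⟨d, rfl⟩ := exists_add_of_le hmj
  have hchoose : (N.choose (m + d) : ℝ) * (m + d).choose m = N.choose m * (N - m).choose d := by
    have h := Nat.choose_mul (n := N) hmj
    rw [Nat.add_sub_cancel_left] at h
    exact_mod_cast h
  simp only [binom, Nat.add_sub_cancel_left, Nat.sub_add_eq, pow_add, mul_pow]
  linear_combination η ^ m * η ^ d * α ^ m * (1 - η) ^ (N - m - d) * (1 - α) ^ d
    * ((N - m).choose (i - m) * β ^ (i - m) * (1 - β) ^ (N - m - (i - m))) * hchoose

lemma binom_mul_K1_comm {N i j : ℕ} (hi : i ≤ N) (hj : j ≤ N) {α β η : ℝ}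
    (h : η * (1 - α) * (1 - β) = (1 - η) * β) :
    binom N j η * K1 N α β i j = binom N i η * K1 N α β j i := by
  rw [K1, K1, min_comm, mul_sum, mul_sum]
  refine sum_congr rfl fun m hm => ?_
  have hmi : m ≤ i := by grind
  have hmj : m ≤ j := by grind
  rw [binom_mul_binom_mul_binom N i hmj, binom_mul_binom_mul_binom N j hmi,
    pow_mul_pow_mul_pow_mul_pow_comm h (Nat.sub_le_sub_right hj m) (Nat.sub_le_sub_right hi m)]
  ring

theorem stmt_2_general (N : ℕ) (α β : ℝ)
    (hα1 : α < 1) (hβ0 : 0 < β) (hβ1 : β < 1)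
    (D₁ : ℝ) (hD : D₁ = 1 + α * β / (1 - α))
    (η : ℝ) (hη : η = β / ((1 - α) * D₁)) :
    ∀ k : ℕ, k ≤ N → ∀ i : ℕ, i ≤ N →
      ∑ j ∈ Finset.range (N + 1),
          K1 N α β i j * (binom N j η * hyp2F1 j k N η⁻¹)
        = α ^ k * (1 - β) ^ k * (binom N i η * hyp2F1 i k N η⁻¹) := by
  intro k hk i hi
  have hd : 0 < 1 - α * (1 - β) := by nlinarith [mul_pos (sub_pos.2 hα1) (sub_pos.2 hβ1)]
  have hηd : η = β / (1 - α * (1 - β)) := by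
    have hden : (1 - α) * D₁ = 1 - α * (1 - β) := by
      rw [hD, mul_add, mul_div_cancel₀ _ (sub_ne_zero.mpr hα1.ne')]
      ring
    rw [hη, hden]
  have hz : β * η⁻¹ = 1 - α * (1 - β) := by
    rw [hηd, inv_div]
    field_simp
  have hbalance : η * (1 - α) * (1 - β) = (1 - η) * β := by
    rw [hηd]
    field_simp
    ring
  calc _ = binom N i η * ∑ j ∈ range (N + 1), K1 N α β j i * hyp2F1 j k N η⁻¹ := by
        rw [mul_sum]
        refine sum_congr rfl fun j hj => ?_
        rw [← mul_assoc, mul_comm (K1 _ _ _ _ _), binom_mul_K1_comm hi (by grind) hbalance]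
        ring
    _ = _ := by
        rw [sum_K1_mul_hyp2F1 hi hk hz, mul_pow]
        ring

/-- `ψ_k(i) = b(i;N;η) ₂F₁(-i,-k;-N;η⁻¹)` is an eigenfunction of the
one-variable cumulative Bernoulli trial kernel with eigenvalue `α^k (1-β)^k`. -/
theorem stmt_2 (N : ℕ) (hN : 1 ≤ N) (α β : ℝ)
    (hα0 : 0 < α) (hα1 : α < 1) (hβ0 : 0 < β) (hβ1 : β < 1)
    (D₁ : ℝ) (hD : D₁ = 1 + α * β / (1 - α))
    (η : ℝ) (hη : η = β / ((1 - α) * D₁)) :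
    ∀ k : ℕ, k ≤ N → ∀ i : ℕ, i ≤ N →
      ∑ j ∈ Finset.range (N + 1),
          K1 N α β i j * (binom N j η * hyp2F1 j k N η⁻¹)
        = α ^ k * (1 - β) ^ k * (binom N i η * hyp2F1 i k N η⁻¹) :=
  stmt_2_general N α β hα1 hβ0 hβ1 D₁ hD η hη
end

section
/- Let N and n ≥ 1 be positive integers, 0 < α_r < 1 for r = 1,…,n, and β_r > 0 with β₁+⋯+β_n < 1. Then the multivariable kernel K is a transition probability kernel: for every state i ∈ ℕⁿ with i₁+⋯+i_n ≤ N, Σ_j K(j;i) = 1, where the sum runs over all j ∈ ℕⁿ with j₁+⋯+j_n ≤ N. -/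
/-- The multinomial distribution
`b_n(x;N;η) = N!/(x₁!⋯x_n!(N-∑x)!) ∏ ηᵢ^{xᵢ} (1-∑η)^{N-∑x}`. -/
noncomputable def bn {n : ℕ} (N : ℕ) (x : Fin n → ℕ) (η : Fin n → ℝ) : ℝ :=
  (N.factorial : ℝ) / ((∏ i, ((x i).factorial : ℝ)) * ((N - ∑ i, x i).factorial : ℝ))
    * (∏ i, η i ^ x i) * (1 - ∑ i, η i) ^ (N - ∑ i, x i)

/-- The multivariable cumulative Bernoulli trial transition kernel:
`K(j;i) = ∑_{k, k_r ≤ min(i_r,j_r)} (∏_r b(k_r;i_r;α_r)) b_n(j-k;N-∑k;β)`,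
the probability of moving from state `i` to state `j`. -/
noncomputable def Kn {n : ℕ} (N : ℕ) (α β : Fin n → ℝ) (j i : Fin n → ℕ) : ℝ :=
  ∑ k ∈ Fintype.piFinset (fun r => Finset.range (min (i r) (j r) + 1)),
    (∏ r, binom (i r) (k r) (α r)) * bn (N - ∑ r, k r) (fun r => j r - k r) β

lemma binom_sum (m : ℕ) (p : ℝ) : ∑ k ∈ Finset.range (m + 1), binom m k p = 1 := by
  have h : ∑ k ∈ Finset.range (m + 1), binom m k p = (p + (1 - p)) ^ m := by
    rw [add_pow]
    refine Finset.sum_congr rfl fun k _ => ?_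
    unfold binom; ring
  rw [h]; norm_num

lemma bn_sum (n M : ℕ) (β : Fin n → ℝ) :
    ∑ x ∈ Finset.filter (fun x => ∑ r, x r ≤ M)
        (Fintype.piFinset fun _ : Fin n => Finset.range (M + 1)), bn M x β = 1 := by
  set f : Fin (n + 1) → ℝ := Fin.snoc β (1 - ∑ r, β r) with hf
  have hsum : ∑ i, f i = 1 := by
    rw [Fin.sum_univ_castSucc]; simp [hf]
  have key := Finset.sum_pow_eq_sum_piAntidiag (Finset.univ : Finset (Fin (n + 1))) f M
  rw [hsum, one_pow] at key
  rw [key]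
  refine Finset.sum_nbij' (fun x => Fin.snoc x (M - ∑ r, x r))
    (fun g => fun r : Fin n => g r.castSucc) ?_ ?_ ?_ ?_ ?_
  · intro x hx
    simp only [Finset.mem_filter, Fintype.mem_piFinset, Finset.mem_range] at hx
    rw [Finset.mem_piAntidiag]
    refine ⟨?_, fun _ _ => Finset.mem_univ _⟩
    rw [Fin.sum_univ_castSucc]
    simp only [Fin.snoc_castSucc, Fin.snoc_last]
    omega
  · intro g hg
    rw [Finset.mem_piAntidiag] at hg
    obtain ⟨hg1, _⟩ := hg
    rw [Fin.sum_univ_castSucc] at hg1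
    simp only [Finset.mem_filter, Fintype.mem_piFinset, Finset.mem_range]
    constructor
    · intro r
      have : g r.castSucc ≤ ∑ s : Fin n, g s.castSucc :=
        Finset.single_le_sum (f := fun s : Fin n => g s.castSucc)
          (fun _ _ => Nat.zero_le _) (Finset.mem_univ r)
      omega
    · omega
  · intro x hx
    funext r
    simp [Fin.snoc_castSucc]
  · intro g hg
    rw [Finset.mem_piAntidiag] at hg
    obtain ⟨hg1, _⟩ := hg
    rw [Fin.sum_univ_castSucc] at hg1
    funext r
    refine Fin.lastCases ?_ ?_ r
    · simp only [Fin.snoc_last]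
      omega
    · intro s
      simp [Fin.snoc_castSucc]
  · intro x hx
    simp only [Finset.mem_filter, Fintype.mem_piFinset, Finset.mem_range] at hx
    set g : Fin (n + 1) → ℕ := Fin.snoc x (M - ∑ r, x r) with hg
    have hsg : ∑ i, g i = M := by
      rw [Fin.sum_univ_castSucc]
      simp only [hg, Fin.snoc_castSucc, Fin.snoc_last]
      omega
    have hprodfact : (∏ i, ((g i).factorial : ℝ))
        = (∏ i, ((x i).factorial : ℝ)) * ((M - ∑ r, x r).factorial : ℝ) := by
      rw [Fin.prod_univ_castSucc]
      simp [hg, Fin.snoc_castSucc, Fin.snoc_last]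
    have hspec := Nat.multinomial_spec Finset.univ g
    rw [hsg] at hspec
    have hm : ((∏ i, ((x i).factorial : ℝ)) * ((M - ∑ r, x r).factorial : ℝ))
        * (Nat.multinomial Finset.univ g : ℝ) = (M.factorial : ℝ) := by
      rw [← hprodfact]
      exact_mod_cast congrArg (Nat.cast : ℕ → ℝ) hspec
    have hA : ((∏ i, ((x i).factorial : ℝ)) * ((M - ∑ r, x r).factorial : ℝ)) ≠ 0 := by
      positivity
    have hdiv : (M.factorial : ℝ)
        / ((∏ i, ((x i).factorial : ℝ)) * ((M - ∑ r, x r).factorial : ℝ))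
        = (Nat.multinomial Finset.univ g : ℝ) := by
      rw [div_eq_iff hA, mul_comm]
      exact hm.symm
    have hprodpow : (∏ i, f i ^ g i)
        = (∏ i, β i ^ x i) * (1 - ∑ r, β r) ^ (M - ∑ r, x r) := by
      rw [Fin.prod_univ_castSucc]
      simp [hf, hg, Fin.snoc_castSucc, Fin.snoc_last]
    unfold bn
    rw [hdiv, hprodpow]
    ring

/-- The multivariable kernel is a transition probability kernel:
for every state `i` with `∑ i_r ≤ N`, `∑_j K(j;i) = 1`. -/
theorem stmt_3 (N n : ℕ) (hN : 0 < N) (hn : 0 < n) (α β : Fin n → ℝ)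
    (hα : ∀ r, 0 < α r ∧ α r < 1) (hβ : ∀ r, 0 < β r) (hβs : ∑ r, β r < 1) :
    ∀ i : Fin n → ℕ, ∑ r, i r ≤ N →
      ∑ j ∈ Finset.filter (fun j => ∑ r, j r ≤ N)
          (Fintype.piFinset fun _ : Fin n => Finset.range (N + 1)),
        Kn N α β j i = 1 := by
  intro i hi
  simp only [Kn]
  rw [Finset.sum_sigma']
  have step : ∑ p ∈ (Finset.filter (fun j => ∑ r, j r ≤ N)
          (Fintype.piFinset fun _ : Fin n => Finset.range (N + 1))).sigma
          (fun j => Fintype.piFinset (fun r => Finset.range (min (i r) (j r) + 1))),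
        (∏ r, binom (i r) (p.2 r) (α r)) * bn (N - ∑ r, p.2 r) (fun r => p.1 r - p.2 r) β
      = ∑ q ∈ (Fintype.piFinset fun r => Finset.range (i r + 1)).sigma
          (fun k => Finset.filter (fun m => ∑ r, m r ≤ N - ∑ r, k r)
            (Fintype.piFinset fun _ : Fin n => Finset.range (N - ∑ r, k r + 1))),
        (∏ r, binom (i r) (q.1 r) (α r)) * bn (N - ∑ r, q.1 r) q.2 β := by
    refine Finset.sum_nbij' (fun p => ⟨p.2, fun r => p.1 r - p.2 r⟩)
      (fun q => ⟨fun r => q.1 r + q.2 r, q.1⟩) ?_ ?_ ?_ ?_ ?_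
    · rintro ⟨j, k⟩ hp
      simp only [Finset.mem_sigma, Finset.mem_filter, Fintype.mem_piFinset,
        Finset.mem_range] at hp ⊢
      obtain ⟨⟨hj, hjN⟩, hk⟩ := hp
      have hk' : ∀ r, k r ≤ i r ∧ k r ≤ j r :=
        fun r => le_min_iff.mp (Nat.lt_succ_iff.mp (hk r))
      have hkj : ∀ r, k r ≤ j r := fun r => (hk' r).2
      have hsum : ∑ r, (j r - k r) + ∑ r, k r = ∑ r, j r := by
        rw [← Finset.sum_add_distrib]
        exact Finset.sum_congr rfl fun r _ => by have := hkj r; omega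
      have hmle : ∑ r, (j r - k r) ≤ N - ∑ r, k r := by omega
      refine ⟨fun r => by have := (hk' r).1; omega, ?_, hmle⟩
      intro r
      have : j r - k r ≤ ∑ s, (j s - k s) :=
        Finset.single_le_sum (f := fun s => j s - k s)
          (fun _ _ => Nat.zero_le _) (Finset.mem_univ r)
      omega
    · rintro ⟨k, m⟩ hq
      simp only [Finset.mem_sigma, Finset.mem_filter, Fintype.mem_piFinset,
        Finset.mem_range] at hq ⊢
      obtain ⟨hk, hm, hms⟩ := hq
      have hkN : ∑ r, k r ≤ N := le_trans
        (Finset.sum_le_sum fun r _ => by have := hk r; omega) hi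
      have hsum : ∑ r, (k r + m r) = ∑ r, k r + ∑ r, m r :=
        Finset.sum_add_distrib
      have hjN : ∑ r, (k r + m r) ≤ N := by omega
      refine ⟨⟨fun r => ?_, hjN⟩, fun r => ?_⟩
      · have : k r + m r ≤ ∑ s, (k s + m s) :=
          Finset.single_le_sum (f := fun s => k s + m s)
            (fun _ _ => Nat.zero_le _) (Finset.mem_univ r)
        omega
      · rw [Nat.lt_succ_iff, le_min_iff]
        constructor
        · have := hk r; omega
        · omega
    · rintro ⟨j, k⟩ hp
      simp only [Finset.mem_sigma, Finset.mem_filter, Fintype.mem_piFinset,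
        Finset.mem_range] at hp
      obtain ⟨_, hk⟩ := hp
      have : (fun r => k r + (j r - k r)) = j := by
        funext r
        have := le_min_iff.mp (Nat.lt_succ_iff.mp (hk r))
        omega
      simp only [this]
    · rintro ⟨k, m⟩ hq
      have : (fun r => k r + m r - k r) = m := by
        funext r; omega
      simp only [this]
    · rintro ⟨j, k⟩ _
      rfl
  rw [step, Finset.sum_sigma]
  have inner : ∀ k ∈ Fintype.piFinset fun r => Finset.range (i r + 1),
      ∑ m ∈ Finset.filter (fun m => ∑ r, m r ≤ N - ∑ r, k r)
          (Fintype.piFinset fun _ : Fin n => Finset.range (N - ∑ r, k r + 1)),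
        (∏ r, binom (i r) (k r) (α r)) * bn (N - ∑ r, k r) m β
      = ∏ r, binom (i r) (k r) (α r) := by
    intro k _
    rw [← Finset.mul_sum, bn_sum, mul_one]
  have hps := Finset.prod_univ_sum (fun r => Finset.range (i r + 1))
    (fun r j => binom (i r) j (α r))
  rw [Finset.sum_congr rfl inner, ← hps]
  simp [binom_sum]
end

section
/- Let N and n ≥ 1 be positive integers, 0 < α_r < 1 for r = 1,…,n, and β_r > 0 with β₁+⋯+β_n < 1. Define D_n = 1 + Σ_{k=1}^n α_kβ_k/(1−α_k) and η_k = β_k/((1−α_k)D_n) for k = 1,…,n. Then the distribution φ₀(i) = b_n(i;N;η) satisfies the detailed-balance condition K(j;i)·φ₀(i) = K(i;j)·φ₀(j) for all states i, j ∈ ℕⁿ with Σi_r ≤ N and Σj_r ≤ N. -/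
/-- symmetric core -/
noncomputable def Fsym {n : ℕ} (N : ℕ) (α β : Fin n → ℝ) (D : ℝ) (k m l : Fin n → ℕ) : ℝ :=
  (N.factorial : ℝ) * ((N - ∑ r, k r).factorial : ℝ)
    / ((∏ r, ((k r).factorial : ℝ)) * (∏ r, ((m r).factorial : ℝ)) * (∏ r, ((l r).factorial : ℝ))
        * ((N - (∑ r, m r + ∑ r, k r)).factorial : ℝ) * ((N - (∑ r, l r + ∑ r, k r)).factorial : ℝ))
    * ((∏ r, α r ^ k r) * (∏ r, β r ^ m r) * (∏ r, β r ^ l r) * (∏ r, β r ^ k r)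
        / (∏ r, (1 - α r) ^ k r))
    * ((1 - ∑ r, β r) ^ (N - (∑ r, m r + ∑ r, k r)) * (1 - ∑ r, β r) ^ (N - (∑ r, l r + ∑ r, k r))
        / D ^ N)

lemma Fsym_symm {n : ℕ} (N : ℕ) (α β : Fin n → ℝ) (D : ℝ) (k m l : Fin n → ℕ) :
    Fsym N α β D k m l = Fsym N α β D k l m := by
  unfold Fsym; ring

lemma aux {n : ℕ} (N : ℕ) (α β η : Fin n → ℝ) (D : ℝ)
    (hα : ∀ r, (1 : ℝ) - α r ≠ 0) (hDne : D ≠ 0)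
    (hη : ∀ r, η r = β r / ((1 - α r) * D))
    (hηs : 1 - ∑ r, η r = (1 - ∑ r, β r) / D)
    (k m l : Fin n → ℕ) (h1 : ∑ r, m r + ∑ r, k r ≤ N) :
    (∏ r, binom (m r + k r) (k r) (α r)) * bn (N - ∑ r, k r) l β
      * bn N (fun r => m r + k r) η = Fsym N α β D k m l := by
  have hsum : ∑ r, (m r + k r) = ∑ r, m r + ∑ r, k r := Finset.sum_add_distrib
  have e1 : N - ∑ r, k r - ∑ r, l r = N - (∑ r, l r + ∑ r, k r) := by omega
  have hchoose : ∀ r : Fin n, ((m r + k r).choose (k r) : ℝ)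
      = ((m r + k r).factorial : ℝ) / (((k r).factorial : ℝ) * ((m r).factorial : ℝ)) := by
    intro r
    rw [Nat.cast_choose ℝ (Nat.le_add_left (k r) (m r)), Nat.add_sub_cancel]
  have hbinom : (∏ r, binom (m r + k r) (k r) (α r))
      = (∏ r, ((m r + k r).factorial : ℝ)) / ((∏ r, ((k r).factorial : ℝ)) * ∏ r, ((m r).factorial : ℝ))
        * ((∏ r, α r ^ k r) * ∏ r, (1 - α r) ^ m r) := by
    rw [show (∏ r, binom (m r + k r) (k r) (α r))
        = ∏ r, (((m r + k r).factorial : ℝ) / (((k r).factorial : ℝ) * ((m r).factorial : ℝ))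
            * (α r ^ k r * (1 - α r) ^ m r)) from Finset.prod_congr rfl fun r _ => by
          rw [binom, Nat.add_sub_cancel, hchoose r]; ring]
    simp [Finset.prod_mul_distrib, Finset.prod_div_distrib]
  have hηprod : (∏ r, η r ^ (m r + k r))
      = ((∏ r, β r ^ m r) * ∏ r, β r ^ k r)
        / (((∏ r, (1 - α r) ^ m r) * ∏ r, (1 - α r) ^ k r) * (D ^ (∑ r, m r) * D ^ (∑ r, k r))) := by
    rw [← Finset.prod_pow_eq_pow_sum Finset.univ m D, ← Finset.prod_pow_eq_pow_sum Finset.univ k D]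
    rw [show (∏ r, η r ^ (m r + k r))
        = ∏ r, (β r ^ m r * β r ^ k r
            / ((1 - α r) ^ m r * (1 - α r) ^ k r * (D ^ m r * D ^ k r))) from
      Finset.prod_congr rfl fun r _ => by
        rw [hη r, pow_add, div_pow, div_pow, mul_pow, mul_pow]; ring]
    simp [Finset.prod_mul_distrib, Finset.prod_div_distrib]
  have hDpow : D ^ N = D ^ (N - (∑ r, m r + ∑ r, k r)) * (D ^ (∑ r, m r) * D ^ (∑ r, k r)) := by
    rw [← pow_add, ← pow_add]
    congr 1
    omega
  have hkne : (∏ r, ((k r).factorial : ℝ)) ≠ 0 :=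
    Finset.prod_ne_zero_iff.mpr fun r _ => Nat.cast_ne_zero.mpr (Nat.factorial_ne_zero _)
  have hmne : (∏ r, ((m r).factorial : ℝ)) ≠ 0 :=
    Finset.prod_ne_zero_iff.mpr fun r _ => Nat.cast_ne_zero.mpr (Nat.factorial_ne_zero _)
  have hlne : (∏ r, ((l r).factorial : ℝ)) ≠ 0 :=
    Finset.prod_ne_zero_iff.mpr fun r _ => Nat.cast_ne_zero.mpr (Nat.factorial_ne_zero _)
  have hmkne : (∏ r, ((m r + k r).factorial : ℝ)) ≠ 0 :=
    Finset.prod_ne_zero_iff.mpr fun r _ => Nat.cast_ne_zero.mpr (Nat.factorial_ne_zero _)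
  have h1αm : (∏ r, (1 - α r) ^ m r) ≠ 0 :=
    Finset.prod_ne_zero_iff.mpr fun r _ => pow_ne_zero _ (hα r)
  have h1αk : (∏ r, (1 - α r) ^ k r) ≠ 0 :=
    Finset.prod_ne_zero_iff.mpr fun r _ => pow_ne_zero _ (hα r)
  have hf1 : ((N - (∑ r, m r + ∑ r, k r)).factorial : ℝ) ≠ 0 :=
    Nat.cast_ne_zero.mpr (Nat.factorial_ne_zero _)
  have hf2 : ((N - (∑ r, l r + ∑ r, k r)).factorial : ℝ) ≠ 0 :=
    Nat.cast_ne_zero.mpr (Nat.factorial_ne_zero _)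
  have hf3 : ((N - ∑ r, k r).factorial : ℝ) ≠ 0 :=
    Nat.cast_ne_zero.mpr (Nat.factorial_ne_zero _)
  unfold bn Fsym
  rw [hbinom, hηprod, hηs, hsum, e1, div_pow, hDpow]
  field_simp

/-- Detailed balance: `φ₀(i) = b_n(i;N;η)` satisfies
`K(j;i) φ₀(i) = K(i;j) φ₀(j)` for the multivariable kernel. -/
theorem stmt_4 (N n : ℕ) (hN : 0 < N) (hn : 0 < n) (α β : Fin n → ℝ)
    (hα : ∀ r, 0 < α r ∧ α r < 1) (hβ : ∀ r, 0 < β r) (hβs : ∑ r, β r < 1)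
    (D : ℝ) (hD : D = 1 + ∑ k, α k * β k / (1 - α k))
    (η : Fin n → ℝ) (hη : ∀ k, η k = β k / ((1 - α k) * D)) :
    ∀ i j : Fin n → ℕ, ∑ r, i r ≤ N → ∑ r, j r ≤ N →
      Kn N α β j i * bn N i η = Kn N α β i j * bn N j η := by
  have hα1 : ∀ r, (1 : ℝ) - α r ≠ 0 := fun r => by have := (hα r).2; linarith
  have hDpos : 0 < D := by
    rw [hD]
    have : 0 ≤ ∑ k, α k * β k / (1 - α k) := Finset.sum_nonneg fun r _ => by
      have h1 := (hα r).1; have h2 := (hα r).2; have h3 := hβ r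
      have h4 : (0:ℝ) < 1 - α r := by linarith
      positivity
    linarith
  have hDne : D ≠ 0 := ne_of_gt hDpos
  have hηs : 1 - ∑ r, η r = (1 - ∑ r, β r) / D := by
    have h1 : ∑ r, η r = (∑ r, β r / (1 - α r)) / D := by
      rw [Finset.sum_div]
      exact Finset.sum_congr rfl fun r _ => by rw [hη r, div_div]
    rw [h1, eq_div_iff hDne, sub_mul, one_mul, div_mul_cancel₀ _ hDne]
    have h2 : ∑ r, β r / (1 - α r) = D - (1 - ∑ r, β r) := by
      rw [hD]
      have : ∑ r, β r / (1 - α r) = ∑ r, (α r * β r / (1 - α r) + β r) :=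
        Finset.sum_congr rfl fun r _ => by have h := hα1 r; field_simp; ring
      rw [this, Finset.sum_add_distrib]; ring
    rw [h2]; ring
  intro i j hi hj
  unfold Kn
  rw [show (fun r => Finset.range (min (j r) (i r) + 1))
      = fun r => Finset.range (min (i r) (j r) + 1) from funext fun r => by rw [min_comm]]
  rw [Finset.sum_mul, Finset.sum_mul]
  refine Finset.sum_congr rfl fun k hk => ?_
  rw [Fintype.mem_piFinset] at hk
  have hki : ∀ r, k r ≤ i r := fun r => by
    have h := Finset.mem_range.mp (hk r)
    rw [Nat.lt_succ_iff, le_min_iff] at h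
    exact h.1
  have hkj : ∀ r, k r ≤ j r := fun r => by
    have h := Finset.mem_range.mp (hk r)
    rw [Nat.lt_succ_iff, le_min_iff] at h
    exact h.2
  set m : Fin n → ℕ := fun r => i r - k r with hm
  set l : Fin n → ℕ := fun r => j r - k r with hl
  have himr : ∀ r, i r = m r + k r := fun r => by
    have := hki r; show i r = i r - k r + k r; omega
  have hjlr : ∀ r, j r = l r + k r := fun r => by
    have := hkj r; show j r = j r - k r + k r; omega
  have him : i = fun r => m r + k r := funext himr
  have hjl : j = fun r => l r + k r := funext hjlr
  have h1 : ∑ r, m r + ∑ r, k r ≤ N := by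
    rw [← Finset.sum_add_distrib]
    calc ∑ r, (m r + k r) = ∑ r, i r := Finset.sum_congr rfl fun r _ => (himr r).symm
    _ ≤ N := hi
  have h2 : ∑ r, l r + ∑ r, k r ≤ N := by
    rw [← Finset.sum_add_distrib]
    calc ∑ r, (l r + k r) = ∑ r, j r := Finset.sum_congr rfl fun r _ => (hjlr r).symm
    _ ≤ N := hj
  have eL : (∏ r, binom (i r) (k r) (α r)) = ∏ r, binom (m r + k r) (k r) (α r) :=
    Finset.prod_congr rfl fun r _ => by rw [himr r]
  have eR : (∏ r, binom (j r) (k r) (α r)) = ∏ r, binom (l r + k r) (k r) (α r) :=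
    Finset.prod_congr rfl fun r _ => by rw [hjlr r]
  calc (∏ r, binom (i r) (k r) (α r)) * bn (N - ∑ r, k r) l β * bn N i η
      = (∏ r, binom (m r + k r) (k r) (α r)) * bn (N - ∑ r, k r) l β
          * bn N (fun r => m r + k r) η := by rw [eL, him]
    _ = Fsym N α β D k m l := aux N α β η D hα1 hDne hη hηs k m l h1
    _ = Fsym N α β D k l m := Fsym_symm N α β D k m l
    _ = (∏ r, binom (l r + k r) (k r) (α r)) * bn (N - ∑ r, k r) m β
          * bn N (fun r => l r + k r) η := (aux N α β η D hα1 hDne hη hηs k l m h2).symm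
    _ = (∏ r, binom (j r) (k r) (α r)) * bn (N - ∑ r, k r) m β * bn N j η := by
          rw [eR, hjl]
end

section
/- Let N and n be positive integers, u an n×n real matrix, and η ∈ ℝⁿ with η_j ≥ 0 and η₁+⋯+η_n ≤ 1. Then for every m ∈ ℕⁿ with m₁+⋯+m_n ≤ N, the generating-function identity Σ_x b_n(x;N;η)·P_m(x) = ∏_{i=1}^n (1 − Σ_{j=1}^n η_j u_{ij})^{m_i} holds, where the sum runs over all x ∈ ℕⁿ with x₁+⋯+x_n ≤ N. -/
/-- The multivariable Krawtchouk polynomial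
`P_m(x) = F₁⁽ⁿ⁾(-m;-x;-N;u)`, a sum over all `n × n` matrices `(k_{ij})`
of nonnegative integers with `∑_{i,j} k_{ij} ≤ N`. -/
noncomputable def P {n : ℕ} (N : ℕ) (u : Fin n → Fin n → ℝ) (m x : Fin n → ℕ) : ℝ :=
  ∑ k ∈ Finset.filter (fun k => ∑ i, ∑ j, k i j ≤ N)
      (Fintype.piFinset fun _ : Fin n => Fintype.piFinset fun _ : Fin n => Finset.range (N + 1)),
    ((∏ i, poch (-(m i : ℝ)) (∑ j, k i j)) * ∏ i, poch (-(x i : ℝ)) (∑ j, k j i)) /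
      ((∏ i, ∏ j, ((k i j).factorial : ℝ)) * poch (-(N : ℝ)) (∑ i, ∑ j, k i j)) *
      ∏ i, ∏ j, u i j ^ k i j

lemma poch_zero (a : ℝ) : poch a 0 = 1 := by simp [poch]

lemma poch_succ (a : ℝ) (r : ℕ) : poch a (r + 1) = poch a r * (a + r) := by
  simp [poch, ascPochhammer_succ_eval]

lemma poch_neg_nat (x c : ℕ) :
    poch (-(x : ℝ)) c = if c ≤ x then (-1) ^ c * (x.descFactorial c : ℝ) else 0 := by
  induction c with
  | zero => simp [poch_zero]
  | succ c ih =>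
    rw [poch_succ, ih]
    by_cases h : c + 1 ≤ x
    · have hc : c ≤ x := Nat.le_of_succ_le h
      rw [if_pos hc, if_pos h, Nat.descFactorial_succ]
      have hx : (-(x : ℝ) + c) = -(((x - c : ℕ) : ℝ)) := by
        rw [Nat.cast_sub hc]; ring
      rw [hx]
      push_cast
      ring
    · by_cases hc : c ≤ x
      · have hxc : x = c := by omega
        rw [if_pos hc, if_neg h]
        subst hxc
        simp
      · rw [if_neg hc, if_neg h]; simp

lemma poch_neg_nat_of_le {x c : ℕ} (h : c ≤ x) :
    poch (-(x : ℝ)) c = (-1) ^ c * (x.descFactorial c : ℝ) := by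
  rw [poch_neg_nat, if_pos h]

lemma poch_neg_nat_of_lt {x c : ℕ} (h : x < c) : poch (-(x : ℝ)) c = 0 := by
  rw [poch_neg_nat, if_neg (by omega)]

lemma poch_neg_nat_ne_zero {x c : ℕ} (h : c ≤ x) : poch (-(x : ℝ)) c ≠ 0 := by
  rw [poch_neg_nat_of_le h]
  have : x.descFactorial c ≠ 0 := by
    simp [Nat.descFactorial_eq_zero_iff_lt]; omega
  positivity

lemma fiber_eq (n R M r : ℕ) (hr : r ≤ M) (hMR : M ≤ R) :
    Finset.filter (fun x => ∑ i, x i = r)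
      (Finset.filter (fun x => ∑ i, x i ≤ M)
        (Fintype.piFinset fun _ : Fin n => Finset.range (R + 1)))
    = Finset.piAntidiag Finset.univ r := by
  ext x
  simp only [Finset.mem_filter, Fintype.mem_piFinset, Finset.mem_range, Finset.mem_piAntidiag]
  constructor
  · rintro ⟨⟨-, -⟩, h⟩; exact ⟨h, fun i _ => Finset.mem_univ i⟩
  · rintro ⟨h, -⟩
    have h' : ∑ i, x i = r := h
    refine ⟨⟨fun i => ?_, by omega⟩, h'⟩
    have := Finset.single_le_sum (f := x) (fun i _ => Nat.zero_le _) (Finset.mem_univ i)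
    omega

lemma inner_multinomial {n : ℕ} (s : ℕ) (f : Fin n → ℝ) (g : ℝ) :
    ∑ x ∈ Finset.piAntidiag Finset.univ s,
      (g / ∏ i, ((x i).factorial : ℝ)) * ∏ i, f i ^ x i
    = g / (s.factorial : ℝ) * (∑ i, f i) ^ s := by
  rw [Finset.sum_pow_eq_sum_piAntidiag, Finset.mul_sum]
  apply Finset.sum_congr rfl
  intro x hx
  have hsum : ∑ i, x i = s := by
    simpa using (Finset.mem_piAntidiag.mp hx).1
  have spec : (∏ i, ((x i).factorial : ℝ)) * (Nat.multinomial Finset.univ x : ℝ)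
      = (s.factorial : ℝ) := by
    rw [← hsum]
    exact_mod_cast congrArg (Nat.cast : ℕ → ℝ) (Nat.multinomial_spec Finset.univ x)
  have h1 : (∏ i, ((x i).factorial : ℝ)) ≠ 0 := by positivity
  have h2 : (s.factorial : ℝ) ≠ 0 := by positivity
  field_simp
  linear_combination (-(g * ∏ i, f i ^ x i)) * spec

lemma lemA (n M : ℕ) (f : Fin n → ℝ) (t : ℝ) :
    ∑ x ∈ Finset.filter (fun x => ∑ i, x i ≤ M)
        (Fintype.piFinset fun _ : Fin n => Finset.range (M + 1)),
      (M.factorial : ℝ) / ((∏ i, ((x i).factorial : ℝ)) * ((M - ∑ i, x i).factorial : ℝ))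
        * (∏ i, f i ^ x i) * t ^ (M - ∑ i, x i)
    = (∑ i, f i + t) ^ M := by
  have hmaps : ∀ x ∈ Finset.filter (fun x => ∑ i, x i ≤ M)
      (Fintype.piFinset fun _ : Fin n => Finset.range (M + 1)),
      (fun x : Fin n → ℕ => ∑ i, x i) x ∈ Finset.range (M + 1) := by
    intro x hx
    simp only [Finset.mem_filter] at hx
    simp only [Finset.mem_range]
    omega
  have hfib := Finset.sum_fiberwise_of_maps_to hmaps
        (fun x => (M.factorial : ℝ)
          / ((∏ i, ((x i).factorial : ℝ)) * ((M - ∑ i, x i).factorial : ℝ))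
          * (∏ i, f i ^ x i) * t ^ (M - ∑ i, x i))
  refine Eq.trans hfib.symm ?_
  rw [add_pow]
  apply Finset.sum_congr rfl
  intro r hr
  have hr' : r ≤ M := by
    have := Finset.mem_range.mp hr; omega
  rw [fiber_eq n M M r hr' le_rfl]
  have key : ∑ x ∈ Finset.piAntidiag Finset.univ r,
      (M.factorial : ℝ) / ((∏ i, ((x i).factorial : ℝ)) * ((M - ∑ i, x i).factorial : ℝ))
        * (∏ i, f i ^ x i) * t ^ (M - ∑ i, x i)
      = ∑ x ∈ Finset.piAntidiag Finset.univ r,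
        (((M.factorial : ℝ) / (((M - r).factorial : ℝ)) * t ^ (M - r))
          / ∏ i, ((x i).factorial : ℝ)) * ∏ i, f i ^ x i := by
    apply Finset.sum_congr rfl
    intro x hx
    have hsum : ∑ i, x i = r := by
      simpa using (Finset.mem_piAntidiag.mp hx).1
    rw [hsum]
    have h1 : (∏ i, ((x i).factorial : ℝ)) ≠ 0 := by positivity
    have h2 : (((M - r).factorial : ℕ) : ℝ) ≠ 0 := by positivity
    field_simp
  rw [key, inner_multinomial]
  have hch : ((M.choose r : ℕ) : ℝ) * (r.factorial : ℝ) * (((M - r).factorial : ℕ) : ℝ)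
      = (M.factorial : ℝ) := by
    exact_mod_cast congrArg (Nat.cast : ℕ → ℝ)
      (Nat.choose_mul_factorial_mul_factorial hr')
  have h2 : (((M - r).factorial : ℕ) : ℝ) ≠ 0 := by positivity
  have h3 : ((r.factorial : ℕ) : ℝ) ≠ 0 := by positivity
  field_simp
  linear_combination (-((∑ i, f i) ^ r * t ^ (M - r))) * hch

lemma lemD (n N m : ℕ) (hm : m ≤ N) (v : Fin n → ℝ) :
    ∑ k ∈ Fintype.piFinset (fun _ : Fin n => Finset.range (N + 1)),
      poch (-(m : ℝ)) (∑ j, k j) * ∏ j, (v j ^ k j / ((k j).factorial : ℝ))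
    = (1 - ∑ j, v j) ^ m := by
  have hrestrict :
      ∑ k ∈ Finset.filter (fun k => ∑ j, k j ≤ m)
          (Fintype.piFinset (fun _ : Fin n => Finset.range (N + 1))),
        poch (-(m : ℝ)) (∑ j, k j) * ∏ j, (v j ^ k j / ((k j).factorial : ℝ))
      = ∑ k ∈ Fintype.piFinset (fun _ : Fin n => Finset.range (N + 1)),
        poch (-(m : ℝ)) (∑ j, k j) * ∏ j, (v j ^ k j / ((k j).factorial : ℝ)) := by
    refine Finset.sum_filter_of_ne ?_
    intro k hk hne
    by_contra hgt
    push_neg at hgt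
    exact hne (by rw [poch_neg_nat_of_lt hgt, zero_mul])
  rw [← hrestrict]
  have hmaps : ∀ k ∈ Finset.filter (fun k => ∑ j, k j ≤ m)
      (Fintype.piFinset (fun _ : Fin n => Finset.range (N + 1))),
      (fun k : Fin n → ℕ => ∑ j, k j) k ∈ Finset.range (m + 1) := by
    intro k hk
    simp only [Finset.mem_filter] at hk
    simp only [Finset.mem_range]
    omega
  have hfib := Finset.sum_fiberwise_of_maps_to hmaps
    (fun k => poch (-(m : ℝ)) (∑ j, k j) * ∏ j, (v j ^ k j / ((k j).factorial : ℝ)))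
  refine Eq.trans hfib.symm ?_
  have hrhs : (1 - ∑ j, v j) ^ m = (-(∑ j, v j) + 1) ^ m := by ring_nf
  rw [hrhs, add_pow]
  apply Finset.sum_congr rfl
  intro r hr
  have hr' : r ≤ m := by
    have := Finset.mem_range.mp hr; omega
  rw [fiber_eq n N m r hr' hm]
  have key : ∑ k ∈ Finset.piAntidiag Finset.univ r,
      poch (-(m : ℝ)) (∑ j, k j) * ∏ j, (v j ^ k j / ((k j).factorial : ℝ))
      = ∑ k ∈ Finset.piAntidiag Finset.univ r,
        (poch (-(m : ℝ)) r / ∏ j, ((k j).factorial : ℝ)) * ∏ j, v j ^ k j := by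
    apply Finset.sum_congr rfl
    intro k hk
    have hsum : ∑ j, k j = r := by
      simpa using (Finset.mem_piAntidiag.mp hk).1
    rw [hsum, Finset.prod_div_distrib]
    ring
  rw [key, inner_multinomial, poch_neg_nat_of_le hr',
    Nat.descFactorial_eq_factorial_mul_choose]
  have h3 : ((r.factorial : ℕ) : ℝ) ≠ 0 := by positivity
  push_cast
  field_simp
  ring

lemma lemB (n N : ℕ) (η : Fin n → ℝ) (c : Fin n → ℕ) (hc : ∑ i, c i ≤ N) :
    ∑ x ∈ Finset.filter (fun x => ∑ i, x i ≤ N)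
        (Fintype.piFinset fun _ : Fin n => Finset.range (N + 1)),
      bn N x η * ∏ i, poch (-(x i : ℝ)) (c i)
    = poch (-(N : ℝ)) (∑ i, c i) * ∏ i, η i ^ c i := by
  obtain ⟨M, hMN⟩ : ∃ M, N = (∑ i, c i) + M := ⟨N - ∑ i, c i, by omega⟩
  have h1 : ∑ x ∈ Finset.filter (fun x => ∀ i, c i ≤ x i)
        (Finset.filter (fun x => ∑ i, x i ≤ N)
          (Fintype.piFinset fun _ : Fin n => Finset.range (N + 1))),
        bn N x η * ∏ i, poch (-(x i : ℝ)) (c i)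
      = ∑ x ∈ Finset.filter (fun x => ∑ i, x i ≤ N)
          (Fintype.piFinset fun _ : Fin n => Finset.range (N + 1)),
        bn N x η * ∏ i, poch (-(x i : ℝ)) (c i) := by
    refine Finset.sum_filter_of_ne ?_
    intro x hx hne i
    by_contra hlt
    push_neg at hlt
    refine hne ?_
    rw [Finset.prod_eq_zero (Finset.mem_univ i) (poch_neg_nat_of_lt hlt), mul_zero]
  rw [← h1]
  have h2 : ∑ y ∈ Finset.filter (fun y => ∑ i, y i ≤ M)
        (Fintype.piFinset fun _ : Fin n => Finset.range (M + 1)),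
      ((-1 : ℝ) ^ (∑ i, c i) * (N.descFactorial (∑ i, c i) : ℝ) * ∏ i, η i ^ c i) *
        ((M.factorial : ℝ) / ((∏ i, ((y i).factorial : ℝ)) * ((M - ∑ i, y i).factorial : ℝ))
          * (∏ i, η i ^ y i) * (1 - ∑ i, η i) ^ (M - ∑ i, y i))
      = ∑ x ∈ Finset.filter (fun x => ∀ i, c i ≤ x i)
          (Finset.filter (fun x => ∑ i, x i ≤ N)
            (Fintype.piFinset fun _ : Fin n => Finset.range (N + 1))),
        bn N x η * ∏ i, poch (-(x i : ℝ)) (c i) := by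
    refine Finset.sum_nbij' (fun y => y + c) (fun x => x - c) ?_ ?_ ?_ ?_ ?_
    · intro y hy
      simp only [Finset.mem_filter, Fintype.mem_piFinset, Finset.mem_range,
        Pi.add_apply] at hy ⊢
      obtain ⟨-, hyM⟩ := hy
      have hsum : ∑ i, (y i + c i) = (∑ i, y i) + ∑ i, c i := by
        rw [Finset.sum_add_distrib]
      refine ⟨⟨fun i => ?_, ?_⟩, fun i => Nat.le_add_left _ _⟩
      · show y i + c i < N + 1
        have h0 := Finset.single_le_sum (f := fun i => y i + c i)
          (fun i _ => Nat.zero_le _) (Finset.mem_univ i)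
        have h0' : y i + c i ≤ ∑ i, (y i + c i) := h0
        omega
      · show ∑ i, (y i + c i) ≤ N
        omega
    · intro x hx
      simp only [Finset.mem_filter, Fintype.mem_piFinset, Finset.mem_range,
        Pi.sub_apply] at hx ⊢
      obtain ⟨⟨-, hxN⟩, hcx⟩ := hx
      have hsum : ∑ i, (x i - c i) = (∑ i, x i) - ∑ i, c i := by
        rw [← Finset.sum_tsub_distrib _ (fun i _ => hcx i)]
      refine ⟨fun i => ?_, ?_⟩
      · show x i - c i < M + 1
        have h0 := Finset.single_le_sum (f := fun i => x i - c i)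
          (fun i _ => Nat.zero_le _) (Finset.mem_univ i)
        have h0' : x i - c i ≤ ∑ i, (x i - c i) := h0
        omega
      · show ∑ i, (x i - c i) ≤ M
        omega
    · intro y hy
      funext i
      simp only [Pi.add_apply, Pi.sub_apply]
      omega
    · intro x hx
      simp only [Finset.mem_filter] at hx
      funext i
      simp only [Pi.add_apply, Pi.sub_apply]
      have := hx.2 i
      omega
    · intro y hy
      simp only [Finset.mem_filter, Fintype.mem_piFinset, Finset.mem_range] at hy
      obtain ⟨-, hyM⟩ := hy
      have hsum : ∑ i, (y i + c i) = (∑ i, y i) + ∑ i, c i := by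
        rw [Finset.sum_add_distrib]
      have hpoch : ∏ i, poch (-(((y i + c i) : ℕ) : ℝ)) (c i)
          = (-1 : ℝ) ^ (∑ i, c i) * ∏ i, (((y i + c i).descFactorial (c i) : ℕ) : ℝ) := by
        rw [Finset.prod_congr rfl (fun i _ => poch_neg_nat_of_le (Nat.le_add_left _ _)),
          Finset.prod_mul_distrib, Finset.prod_pow_eq_pow_sum]
      have hfac : ∀ i : Fin n, (((y i + c i).factorial : ℕ) : ℝ)
          = (((y i).factorial : ℕ) : ℝ) * (((y i + c i).descFactorial (c i) : ℕ) : ℝ) := by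
        intro i
        have h0 := Nat.factorial_mul_descFactorial (Nat.le_add_left (c i) (y i))
        rw [Nat.add_sub_cancel] at h0
        exact_mod_cast congrArg (Nat.cast : ℕ → ℝ) h0.symm
      have hNfac : (N.factorial : ℝ)
          = (M.factorial : ℝ) * ((N.descFactorial (∑ i, c i) : ℕ) : ℝ) := by
        have h0 := Nat.factorial_mul_descFactorial hc
        have h0' : N - ∑ i, c i = M := by omega
        rw [h0'] at h0
        exact_mod_cast congrArg (Nat.cast : ℕ → ℝ) h0.symm
      have hNsub : N - ((∑ i, y i) + ∑ i, c i) = M - ∑ i, y i := by omega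
      simp only [bn, Pi.add_apply]
      rw [hpoch, hsum, hNsub]
      rw [Finset.prod_congr rfl (fun i (_ : i ∈ Finset.univ) => hfac i),
        Finset.prod_mul_distrib]
      have hηsplit : ∏ i, η i ^ (y i + c i) = (∏ i, η i ^ y i) * ∏ i, η i ^ c i := by
        rw [← Finset.prod_mul_distrib]
        exact Finset.prod_congr rfl (fun i _ => pow_add _ _ _)
      rw [hηsplit, hNfac]
      have hd : (∏ i, (((y i + c i).descFactorial (c i) : ℕ) : ℝ)) ≠ 0 := by
        apply Finset.prod_ne_zero_iff.mpr
        intro i _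
        have h0 : (y i + c i).descFactorial (c i) ≠ 0 := by
          simp [Nat.descFactorial_eq_zero_iff_lt]
        positivity
      have hy0 : (∏ i, (((y i).factorial : ℕ) : ℝ)) ≠ 0 := by positivity
      have hM0 : (((M - ∑ i, y i).factorial : ℕ) : ℝ) ≠ 0 := by positivity
      field_simp
  rw [← h2, ← Finset.mul_sum, lemA n M η (1 - ∑ i, η i)]
  have hone : (∑ i, η i + (1 - ∑ i, η i)) = 1 := by ring
  rw [hone, one_pow, mul_one, poch_neg_nat_of_le hc]

lemma perk (n N : ℕ) (u : Fin n → Fin n → ℝ) (η : Fin n → ℝ) (m : Fin n → ℕ)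
    (k : Fin n → Fin n → ℕ) (hk : ∑ i, ∑ j, k i j ≤ N) :
    ∑ x ∈ Finset.filter (fun x => ∑ i, x i ≤ N)
        (Fintype.piFinset fun _ : Fin n => Finset.range (N + 1)),
      bn N x η *
        (((∏ i, poch (-(m i : ℝ)) (∑ j, k i j)) * ∏ i, poch (-(x i : ℝ)) (∑ j, k j i)) /
          ((∏ i, ∏ j, ((k i j).factorial : ℝ)) * poch (-(N : ℝ)) (∑ i, ∑ j, k i j)) *
          ∏ i, ∏ j, u i j ^ k i j)
    = ∏ i, (poch (-(m i : ℝ)) (∑ j, k i j) *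
        ∏ j, ((η j * u i j) ^ k i j / ((k i j).factorial : ℝ))) := by
  have hswap : ∑ i, ∑ j, k j i = ∑ i, ∑ j, k i j := Finset.sum_comm (f := fun i j => k j i)
  have hc : ∑ i, (∑ j, k j i) ≤ N := by rw [hswap]; exact hk
  have hB := lemB n N η (fun i => ∑ j, k j i) hc
  have step1 : ∑ x ∈ Finset.filter (fun x => ∑ i, x i ≤ N)
        (Fintype.piFinset fun _ : Fin n => Finset.range (N + 1)),
      bn N x η *
        (((∏ i, poch (-(m i : ℝ)) (∑ j, k i j)) * ∏ i, poch (-(x i : ℝ)) (∑ j, k j i)) /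
          ((∏ i, ∏ j, ((k i j).factorial : ℝ)) * poch (-(N : ℝ)) (∑ i, ∑ j, k i j)) *
          ∏ i, ∏ j, u i j ^ k i j)
      = ((∏ i, poch (-(m i : ℝ)) (∑ j, k i j)) /
          ((∏ i, ∏ j, ((k i j).factorial : ℝ)) * poch (-(N : ℝ)) (∑ i, ∑ j, k i j)) *
          ∏ i, ∏ j, u i j ^ k i j) *
        ∑ x ∈ Finset.filter (fun x => ∑ i, x i ≤ N)
          (Fintype.piFinset fun _ : Fin n => Finset.range (N + 1)),
          bn N x η * ∏ i, poch (-(x i : ℝ)) (∑ j, k j i) := by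
    rw [Finset.mul_sum]
    apply Finset.sum_congr rfl
    intro x hx
    ring
  rw [step1, hB, hswap]
  have hpoch0 : poch (-(N : ℝ)) (∑ i, ∑ j, k i j) ≠ 0 := poch_neg_nat_ne_zero hk
  have hF : (∏ i, ∏ j, ((k i j).factorial : ℝ)) ≠ 0 := by positivity
  have hE : ∏ i, η i ^ (∑ j, k j i) = ∏ i, ∏ j, η j ^ k i j := by
    have e1 : ∏ i, η i ^ (∑ j, k j i) = ∏ i, ∏ j, η i ^ k j i := by
      apply Finset.prod_congr rfl
      intro i _
      rw [Finset.prod_pow_eq_pow_sum]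
    rw [e1, Finset.prod_comm]
  rw [hE]
  have hrhs : ∏ i, (poch (-(m i : ℝ)) (∑ j, k i j) *
        ∏ j, ((η j * u i j) ^ k i j / ((k i j).factorial : ℝ)))
      = (∏ i, poch (-(m i : ℝ)) (∑ j, k i j)) *
        ((∏ i, ∏ j, η j ^ k i j) * (∏ i, ∏ j, u i j ^ k i j) /
          ∏ i, ∏ j, ((k i j).factorial : ℝ)) := by
    rw [Finset.prod_mul_distrib]
    congr 1
    simp_rw [mul_pow, Finset.prod_div_distrib, Finset.prod_mul_distrib]
  rw [hrhs]
  field_simp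

/-- Generating-function identity (3.1):
`∑_x b_n(x;N;η) P_m(x) = ∏_i (1 - ∑_j η_j u_{ij})^{m_i}`. -/
theorem stmt_6 (N n : ℕ) (hN : 0 < N) (hn : 0 < n)
    (u : Fin n → Fin n → ℝ) (η : Fin n → ℝ)
    (hη : ∀ j, 0 ≤ η j) (hηs : ∑ j, η j ≤ 1) :
    ∀ m : Fin n → ℕ, ∑ i, m i ≤ N →
      ∑ x ∈ Finset.filter (fun x => ∑ i, x i ≤ N)
          (Fintype.piFinset fun _ : Fin n => Finset.range (N + 1)),
        bn N x η * P N u m x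
      = ∏ i, (1 - ∑ j, η j * u i j) ^ m i := by
  intro m hm
  have hmN : ∀ i, m i ≤ N := fun i =>
    le_trans (Finset.single_le_sum (f := m) (fun i _ => Nat.zero_le _) (Finset.mem_univ i)) hm
  simp only [P, Finset.mul_sum]
  rw [Finset.sum_comm]
  rw [Finset.sum_congr rfl (fun k hk => perk n N u η m k (Finset.mem_filter.mp hk).2)]
  rw [Finset.sum_subset (Finset.filter_subset _ _) ?_]
  · rw [← Finset.prod_univ_sum
      (fun _ : Fin n => Fintype.piFinset fun _ : Fin n => Finset.range (N + 1))
      (fun i row => poch (-(m i : ℝ)) (∑ j, row j) *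
        ∏ j, ((η j * u i j) ^ row j / ((row j).factorial : ℝ)))]
    exact Finset.prod_congr rfl fun i _ => lemD n N (m i) (hmN i) (fun j => η j * u i j)
  · intro k hk hnot
    have hgt : ¬ (∑ i, ∑ j, k i j ≤ N) := by
      intro hle; exact hnot (Finset.mem_filter.mpr ⟨hk, hle⟩)
    push_neg at hgt
    have hex : ∃ i, m i < ∑ j, k i j := by
      by_contra hall
      push_neg at hall
      have hle : ∑ i, ∑ j, k i j ≤ ∑ i, m i :=
        Finset.sum_le_sum (fun i _ => hall i)
      omega
    obtain ⟨i, hi⟩ := hex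
    apply Finset.prod_eq_zero (Finset.mem_univ i)
    rw [poch_neg_nat_of_lt hi, zero_mul]
end

section
/- Let N ≥ 1 and n ≥ 1 be integers, u an n×n real matrix, and η ∈ ℝⁿ with η_j ≥ 0 and η₁+⋯+η_n ≤ 1. Assume Σ_{j=1}^n η_j u_{rj} = 1 for all r = 1,…,n, and Σ_{j=1}^n η_j u_{rj}u_{sj} = 1 for all r ≠ s. Set Δ_j := Σ_{s=1}^n η_s u_{js}² − 1. Then the multivariable Krawtchouk polynomials are orthogonal with respect to the multinomial weight: for all m, m' ∈ ℕⁿ with Σm_k ≤ N and Σm'_k ≤ N, Σ_x b_n(x;N;η)·P_m(x)·P_{m'}(x) = δ_{m,m'} · [m₁!⋯m_n!·(N−Σ_k m_k)!/N!] · ∏_{j=1}^n Δ_j^{m_j}, where the sum runs over all x ∈ ℕⁿ with x₁+⋯+x_n ≤ N. -/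
open Finset

namespace Krawtchouk

variable {n : ℕ}

def boundedTuples (N n : ℕ) : Finset (Fin n → ℕ) :=
  (Fintype.piFinset fun _ : Fin n => range (N + 1)).filter fun x => ∑ i, x i ≤ N

lemma mem_boundedTuples {N : ℕ} {x : Fin n → ℕ} : x ∈ boundedTuples N n ↔ ∑ i, x i ≤ N := by
  refine mem_filter.trans ⟨And.right, fun h => ⟨Fintype.mem_piFinset.2 fun i => ?_, h⟩⟩
  exact mem_range.2 <| Nat.lt_succ_of_le <|
    (single_le_sum (fun j _ => (x j).zero_le) (mem_univ i)).trans h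

/-- `N! / (x₁! ⋯ xₙ! (N - ∑ xᵢ)!)`, the slack part `N - ∑ xᵢ` being indexed by `none`. -/
def multinomialCoeff (N : ℕ) (x : Fin n → ℕ) : ℕ :=
  Nat.multinomial univ fun o : Option (Fin n) => o.elim (N - ∑ i, x i) x

lemma multinomialCoeff_pos (N : ℕ) (x : Fin n → ℕ) : 0 < multinomialCoeff N x :=
  Nat.multinomial_pos _ _

lemma multinomialCoeff_spec {N : ℕ} {x : Fin n → ℕ} (h : ∑ i, x i ≤ N) :
    multinomialCoeff N x * ((∏ i, (x i).factorial) * (N - ∑ i, x i).factorial) = N.factorial := by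
  have := Nat.multinomial_spec univ fun o : Option (Fin n) => o.elim (N - ∑ i, x i) x
  simp only [Fintype.prod_option, Fintype.sum_option, Option.elim_none, Option.elim_some,
    Nat.sub_add_cancel h] at this
  rw [← this, multinomialCoeff]
  ring

lemma multinomialCoeff_mul_prod_factorial {x : ℕ} {κ : Fin n → ℕ} (h : ∑ a, κ a ≤ x) :
    multinomialCoeff x κ * ∏ a, (κ a).factorial = x.descFactorial (∑ a, κ a) := by
  refine Nat.eq_of_mul_eq_mul_left (Nat.factorial_pos (x - ∑ a, κ a)) ?_
  rw [Nat.factorial_mul_descFactorial h, ← multinomialCoeff_spec h]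
  ring

theorem add_pow_eq_sum_multinomialCoeff {R : Type*} [CommSemiring R] (N : ℕ) (a : Fin n → R)
    (b : R) : (∑ i, a i + b) ^ N =
      ∑ x ∈ boundedTuples N n, multinomialCoeff N x * (∏ i, a i ^ x i) * b ^ (N - ∑ i, x i) := by
  have h := sum_pow_eq_sum_piAntidiag univ (fun o : Option (Fin n) => o.elim b a) N
  simp only [Fintype.sum_option, Fintype.prod_option, Option.elim_none, Option.elim_some] at h
  have total {k : Option (Fin n) → ℕ} (hk : k ∈ univ.piAntidiag N) :
      k none + ∑ i, k (some i) = N := by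
    rwa [mem_piAntidiag, Fintype.sum_option, and_iff_left (fun _ _ => mem_univ _)] at hk
  have extend {k : Option (Fin n) → ℕ} (hk : k ∈ univ.piAntidiag N) :
      (fun o : Option (Fin n) => o.elim (N - ∑ i, k (some i)) fun i => k (some i)) = k := by
    funext o
    cases o <;> simp only [Option.elim_none, Option.elim_some]
    have := total hk
    omega
  rw [add_comm, h]
  refine sum_nbij' (fun k i => k (some i)) (fun x o => o.elim (N - ∑ i, x i) x) ?_ ?_ ?_ ?_ ?_
  · intro k hk
    have := total hk
    simp only [mem_boundedTuples]
    omega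
  · intro x hx
    simp only [mem_piAntidiag, Fintype.sum_option, Option.elim_none, Option.elim_some]
    exact ⟨Nat.sub_add_cancel (mem_boundedTuples.1 hx), fun _ _ => mem_univ _⟩
  · intro k hk
    exact extend hk
  · intro x _
    rfl
  · intro k hk
    have := total hk
    simp only [multinomialCoeff, extend hk, show k none = N - ∑ i, k (some i) by omega]
    ring

lemma multinomialCoeff_add_mul_prod_descFactorial {N : ℕ} (ρ p : Fin n → ℕ)
    (h : ∑ i, ρ i + ∑ i, p i ≤ N) :
    multinomialCoeff N (ρ + p) * ∏ i, (ρ i + p i).descFactorial (ρ i) =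
      N.descFactorial (∑ i, ρ i) * multinomialCoeff (N - ∑ i, ρ i) p := by
  have hsum : ∑ i, (ρ + p) i = ∑ i, ρ i + ∑ i, p i := sum_add_distrib
  have hfac : (∏ i, (ρ i + p i).descFactorial (ρ i)) * ∏ i, (p i).factorial =
      ∏ i, ((ρ + p) i).factorial := by
    rw [← prod_mul_distrib]
    refine prod_congr rfl fun i _ => ?_
    simpa [mul_comm] using Nat.factorial_mul_descFactorial (Nat.le_add_right (ρ i) (p i))
  refine Nat.eq_of_mul_eq_mul_right (Nat.mul_pos
    (prod_pos (s := univ) fun i _ => Nat.factorial_pos (p i))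
    (Nat.factorial_pos (N - ∑ i, ρ i - ∑ i, p i))) ?_
  calc multinomialCoeff N (ρ + p) * (∏ i, (ρ i + p i).descFactorial (ρ i)) *
        ((∏ i, (p i).factorial) * (N - ∑ i, ρ i - ∑ i, p i).factorial)
      = multinomialCoeff N (ρ + p) * ((∏ i, ((ρ + p) i).factorial) *
          (N - ∑ i, (ρ + p) i).factorial) := by
        rw [← hfac, hsum, Nat.sub_sub]; ring
    _ = N.factorial := multinomialCoeff_spec (hsum ▸ h)
    _ = N.descFactorial (∑ i, ρ i) * (multinomialCoeff (N - ∑ i, ρ i) p *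
          ((∏ i, (p i).factorial) * (N - ∑ i, ρ i - ∑ i, p i).factorial)) := by
        rw [multinomialCoeff_spec (by omega), mul_comm,
          Nat.factorial_mul_descFactorial (le_of_add_le_left h)]
    _ = _ := by ring

-- `z^ρ ∂^ρ` applied to `(∑ zᵢ + 1)ᴺ`.
theorem sum_multinomialCoeff_mul_prod_descFactorial {R : Type*} [CommSemiring R] {N : ℕ}
    (ρ : Fin n → ℕ) (hρ : ∑ i, ρ i ≤ N) (z : Fin n → R) :
    ∑ m ∈ boundedTuples N n,
        ((multinomialCoeff N m * ∏ i, (m i).descFactorial (ρ i) : ℕ) : R) * ∏ i, z i ^ m i =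
      N.descFactorial (∑ i, ρ i) * (∏ i, z i ^ ρ i) * (∑ i, z i + 1) ^ (N - ∑ i, ρ i) := by
  simp only [add_pow_eq_sum_multinomialCoeff, one_pow, mul_one, mul_sum]
  symm
  refine sum_of_injOn (ρ + ·) (fun p _ q _ h => add_left_cancel h) ?_ ?_ ?_
  · intro p hp
    simp only [mem_coe, mem_boundedTuples, Pi.add_apply, sum_add_distrib] at hp ⊢
    omega
  · intro m hm hm_img
    obtain ⟨i, hi⟩ : ∃ i, m i < ρ i := by
      by_contra! hρm
      refine hm_img ⟨m - ρ, ?_, funext fun i => Nat.add_sub_cancel' (hρm i)⟩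
      have := sum_tsub_distrib univ fun i _ => hρm i
      simp only [mem_coe, mem_boundedTuples, Pi.sub_apply] at hm ⊢
      omega
    rw [prod_eq_zero (mem_univ i) (Nat.descFactorial_eq_zero_iff_lt.2 hi)]
    simp
  · intro p hp
    have hp' := mem_boundedTuples.1 hp
    simp only [Pi.add_apply, pow_add, prod_mul_distrib]
    rw [multinomialCoeff_add_mul_prod_descFactorial ρ p (by omega)]
    push_cast
    ring

lemma bn_eq_multinomialCoeff_mul {N : ℕ} {x : Fin n → ℕ} (η : Fin n → ℝ) (hx : ∑ i, x i ≤ N) :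
    bn N x η = multinomialCoeff N x * (∏ i, η i ^ x i) * (1 - ∑ i, η i) ^ (N - ∑ i, x i) := by
  rw [bn, ← multinomialCoeff_spec hx]
  push_cast
  field_simp

lemma poch_neg_natCast (m r : ℕ) : poch (-(m : ℝ)) r = (-1) ^ r * m.descFactorial r := by
  rw [poch, ascPochhammer_eval_neg_eq_descPochhammer, descPochhammer_eval_eq_descFactorial]

lemma poch_neg_natCast_eq_zero {m r : ℕ} (h : m < r) : poch (-(m : ℝ)) r = 0 := by
  simp [poch_neg_natCast, Nat.descFactorial_eq_zero_iff_lt.2 h]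

lemma poch_neg_div_prod_factorial {x : ℕ} {κ : Fin n → ℕ} (h : ∑ a, κ a ≤ x) :
    poch (-(x : ℝ)) (∑ a, κ a) / ∏ a, ((κ a).factorial : ℝ) =
      (-1) ^ (∑ a, κ a) * multinomialCoeff x κ := by
  rw [poch_neg_natCast, ← multinomialCoeff_mul_prod_factorial h]
  push_cast
  field_simp

section Moments

variable {R : Type*} [CommRing R] (η : Fin n → R) (u : Fin n → Fin n → R)

lemma sum_mul_sum_mul_eq_sum (h1 : ∀ r, ∑ j, η j * u r j = 1) (z : Fin n → R) :
    ∑ j, η j * ∑ i, z i * u i j = ∑ i, z i := by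
  simp only [mul_sum]
  rw [sum_comm]
  refine sum_congr rfl fun i _ => ?_
  calc ∑ j, η j * (z i * u i j) = z i * ∑ j, η j * u i j := by
        rw [mul_sum]; exact sum_congr rfl fun j _ => by ring
    _ = z i := by rw [h1, mul_one]

lemma sum_mul_mul_eq_one_add_ite (h2 : ∀ r s, r ≠ s → ∑ j, η j * u r j * u s j = 1) (r s : Fin n) :
    ∑ j, η j * u r j * u s j = 1 + if r = s then ∑ j, η j * u r j ^ 2 - 1 else 0 := by
  split_ifs with hrs
  · subst hrs
    simp only [sq, mul_assoc]
    ring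
  · rw [h2 r s hrs, add_zero]

lemma sum_mul_sum_mul_mul_sum_mul_eq (h2 : ∀ r s, r ≠ s → ∑ j, η j * u r j * u s j = 1)
    (z w : Fin n → R) :
    ∑ j, η j * (∑ i, z i * u i j) * (∑ k, w k * u k j) =
      (∑ i, z i) * (∑ k, w k) + ∑ i, (∑ j, η j * u i j ^ 2 - 1) * (z i * w i) := by
  have hpair : ∀ i k, ∑ j, η j * (z i * u i j) * (w k * u k j) =
      z i * w k + if i = k then (∑ j, η j * u i j ^ 2 - 1) * (z i * w i) else 0 := fun i k => by
    calc ∑ j, η j * (z i * u i j) * (w k * u k j) = z i * w k * ∑ j, η j * u i j * u k j := by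
          rw [mul_sum]; exact sum_congr rfl fun j _ => by ring
      _ = _ := by
        rw [sum_mul_mul_eq_one_add_ite η u h2]
        split_ifs with hik
        · subst hik; ring
        · ring
  calc ∑ j, η j * (∑ i, z i * u i j) * (∑ k, w k * u k j)
      = ∑ i, ∑ k, ∑ j, η j * (z i * u i j) * (w k * u k j) := by
        simp only [mul_sum, sum_mul]
        exact (sum_congr rfl fun _ _ => sum_comm).trans
          (sum_comm.trans (sum_congr rfl fun _ _ => sum_comm))
    _ = _ := by
        simp only [hpair, sum_add_distrib, sum_ite_eq, mem_univ, if_true, sum_mul_sum]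

theorem sum_mul_mul_add_eq_one_add_sum (h1 : ∀ r, ∑ j, η j * u r j = 1)
    (h2 : ∀ r s, r ≠ s → ∑ j, η j * u r j * u s j = 1) (z w : Fin n → R) :
    ∑ j, η j * (∑ i, z i + 1 - ∑ i, z i * u i j) * (∑ i, w i + 1 - ∑ i, w i * u i j) +
        (1 - ∑ j, η j) * ((∑ i, z i + 1) * (∑ i, w i + 1)) =
      1 + ∑ i, (∑ j, η j * u i j ^ 2 - 1) * (z i * w i) := by
  set A := ∑ i, z i + 1
  set B := ∑ i, w i + 1
  have hexpand : ∀ j, η j * (A - ∑ i, z i * u i j) * (B - ∑ i, w i * u i j) =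
      A * B * η j - A * (η j * ∑ i, w i * u i j) - B * (η j * ∑ i, z i * u i j) +
        η j * (∑ i, z i * u i j) * (∑ i, w i * u i j) := fun j => by ring
  simp only [hexpand, sum_add_distrib, sum_sub_distrib, ← mul_sum, sum_mul_sum_mul_eq_sum η u h1,
    sum_mul_sum_mul_mul_sum_mul_eq η u h2]
  ring

end Moments

section GeneratingFunction

variable {R : Type*} [CommRing R] [Algebra ℝ R]

theorem sum_poch_div_mul_pow (x : ℕ) (y : Fin n → R) (b : R) :
    ∑ κ ∈ boundedTuples x n,
        algebraMap ℝ R (poch (-(x : ℝ)) (∑ a, κ a) / ∏ a, ((κ a).factorial : ℝ)) *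
          (∏ a, y a ^ κ a) * b ^ (x - ∑ a, κ a) = (b - ∑ a, y a) ^ x := by
  rw [sub_eq_neg_add, ← sum_neg_distrib, add_pow_eq_sum_multinomialCoeff]
  refine sum_congr rfl fun κ hκ => ?_
  rw [poch_neg_div_prod_factorial (mem_boundedTuples.1 hκ)]
  simp only [map_mul, map_pow, map_neg, map_one, map_natCast, neg_pow (y _), prod_mul_distrib,
    prod_pow_eq_pow_sum]
  ring

def boundedMatrices (N n : ℕ) : Finset (Fin n → Fin n → ℕ) :=
  (Fintype.piFinset fun _ : Fin n => Fintype.piFinset fun _ : Fin n => range (N + 1)).filter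
    fun k => ∑ i, ∑ j, k i j ≤ N

/-- The factor of the `k`-th term of `P N u m x` that involves neither `m` nor `N`. -/
noncomputable def matrixCoeff (u : Fin n → Fin n → ℝ) (x : Fin n → ℕ) (k : Fin n → Fin n → ℕ) : ℝ :=
  (∏ j, poch (-(x j : ℝ)) (∑ i, k i j)) / (∏ i, ∏ j, ((k i j).factorial : ℝ)) *
    ∏ i, ∏ j, u i j ^ k i j

lemma P_eq_sum_matrixCoeff (N : ℕ) (u : Fin n → Fin n → ℝ) (m x : Fin n → ℕ) :
    P N u m x = ∑ k ∈ boundedMatrices N n, ((∏ i, (m i).descFactorial (∑ j, k i j) : ℕ) : ℝ) *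
      (matrixCoeff u x k / N.descFactorial (∑ i, ∑ j, k i j)) := by
  refine sum_congr rfl fun k _ => ?_
  have hrows : ∏ i, poch (-(m i : ℝ)) (∑ j, k i j) =
      (-1) ^ (∑ i, ∑ j, k i j) * ∏ i, ((m i).descFactorial (∑ j, k i j) : ℝ) := by
    simp only [poch_neg_natCast, prod_mul_distrib, prod_pow_eq_pow_sum]
  rw [hrows, poch_neg_natCast, matrixCoeff]
  push_cast
  field_simp

noncomputable def genFun (N : ℕ) (u : Fin n → Fin n → ℝ) (x : Fin n → ℕ) (z : Fin n → R) : R :=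
  (∏ j, (∑ i, z i + 1 - ∑ i, z i * algebraMap ℝ R (u i j)) ^ x j) * (∑ i, z i + 1) ^ (N - ∑ j, x j)

lemma sum_multinomialCoeff_mul_P_eq_sum_matrixCoeff (N : ℕ) (u : Fin n → Fin n → ℝ)
    (x : Fin n → ℕ) (z : Fin n → R) :
    ∑ m ∈ boundedTuples N n, multinomialCoeff N m * algebraMap ℝ R (P N u m x) * ∏ i, z i ^ m i =
      ∑ k ∈ boundedMatrices N n, algebraMap ℝ R (matrixCoeff u x k) *
        (∏ i, z i ^ ∑ j, k i j) * (∑ i, z i + 1) ^ (N - ∑ i, ∑ j, k i j) := by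
  simp only [P_eq_sum_matrixCoeff, map_sum, mul_sum, sum_mul]
  rw [sum_comm]
  refine sum_congr rfl fun k hk => ?_
  have hkN : ∑ i, ∑ j, k i j ≤ N := (mem_filter.1 hk).2
  have hE : (N.descFactorial (∑ i, ∑ j, k i j) : ℝ) ≠ 0 := by
    exact_mod_cast (Nat.descFactorial_pos.2 hkN).ne'
  calc ∑ m ∈ boundedTuples N n, multinomialCoeff N m * algebraMap ℝ R
          ((∏ i, (m i).descFactorial (∑ j, k i j) : ℕ) *
            (matrixCoeff u x k / N.descFactorial (∑ i, ∑ j, k i j))) * ∏ i, z i ^ m i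
      = algebraMap ℝ R (matrixCoeff u x k / N.descFactorial (∑ i, ∑ j, k i j)) *
          ∑ m ∈ boundedTuples N n, ((multinomialCoeff N m * ∏ i, (m i).descFactorial
            (∑ j, k i j) : ℕ) : R) * ∏ i, z i ^ m i := by
        rw [mul_sum]
        refine sum_congr rfl fun m _ => ?_
        simp only [map_mul, map_natCast, Nat.cast_mul]
        ring
    _ = _ := by
        rw [sum_multinomialCoeff_mul_prod_descFactorial _ hkN, ← map_natCast (algebraMap ℝ R)]
        simp only [← mul_assoc, ← map_mul, div_mul_cancel₀ _ hE]

/-- The factor that the `j`-th column `κ` of `k` contributes to the `k`-th term of the expansion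
of `genFun`. -/
noncomputable def colTerm (u : Fin n → Fin n → ℝ) (x : Fin n → ℕ) (z : Fin n → R) (j : Fin n)
    (κ : Fin n → ℕ) : R :=
  algebraMap ℝ R (poch (-(x j : ℝ)) (∑ i, κ i) / ∏ i, ((κ i).factorial : ℝ)) *
    (∏ i, (z i * algebraMap ℝ R (u i j)) ^ κ i) * (∑ i, z i + 1) ^ (x j - ∑ i, κ i)

lemma colTerm_eq_zero (u : Fin n → Fin n → ℝ) {x : Fin n → ℕ} (z : Fin n → R) {j : Fin n}
    {κ : Fin n → ℕ} (h : x j < ∑ i, κ i) : colTerm u x z j κ = 0 := by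
  simp [colTerm, poch_neg_natCast_eq_zero h]

lemma sum_colTerm (u : Fin n → Fin n → ℝ) {N : ℕ} {x : Fin n → ℕ} (z : Fin n → R) {j : Fin n}
    (hxj : x j ≤ N) :
    ∑ κ ∈ Fintype.piFinset (fun _ : Fin n => range (N + 1)), colTerm u x z j κ =
      (∑ i, z i + 1 - ∑ i, z i * algebraMap ℝ R (u i j)) ^ x j := by
  rw [← sum_poch_div_mul_pow]
  symm
  refine sum_subset (fun κ hκ => ?_) fun κ _ hκ => colTerm_eq_zero u z ?_
  · have hκ := mem_boundedTuples.1 hκ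
    refine Fintype.mem_piFinset.2 fun i => mem_range.2 (Nat.lt_succ_of_le ?_)
    exact (single_le_sum (fun i _ => (κ i).zero_le) (mem_univ i)).trans (hκ.trans hxj)
  · exact not_le.1 (mt mem_boundedTuples.2 hκ)

lemma matrixTerm_eq_prod_colTerm (u : Fin n → Fin n → ℝ) {N : ℕ} {x : Fin n → ℕ} (z : Fin n → R)
    (hx : ∑ j, x j ≤ N) (k : Fin n → Fin n → ℕ) :
    algebraMap ℝ R (matrixCoeff u x k) * (∏ i, z i ^ ∑ j, k i j) *
        (∑ i, z i + 1) ^ (N - ∑ i, ∑ j, k i j) =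
      (∑ i, z i + 1) ^ (N - ∑ j, x j) * ∏ j, colTerm u x z j fun i => k i j := by
  by_cases hcols : ∀ j, ∑ i, k i j ≤ x j
  · have hexp : N - ∑ i, ∑ j, k i j = (N - ∑ j, x j) + ∑ j, (x j - ∑ i, k i j) := by
      rw [sum_tsub_distrib univ fun j _ => hcols j, sum_comm]
      have := sum_le_sum fun j (_ : j ∈ univ) => hcols j
      omega
    have hcoeff : matrixCoeff u x k = ∏ j, (poch (-(x j : ℝ)) (∑ i, k i j) /
        (∏ i, ((k i j).factorial : ℝ)) * ∏ i, u i j ^ k i j) := by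
      rw [matrixCoeff, prod_comm (f := fun i j => ((k i j).factorial : ℝ)),
        prod_comm (f := fun i j => u i j ^ k i j), ← prod_div_distrib, ← prod_mul_distrib]
    have hz : ∏ i, z i ^ ∑ j, k i j = ∏ j, ∏ i, z i ^ k i j := by
      simp only [← prod_pow_eq_pow_sum]
      exact prod_comm
    rw [hexp, pow_add, ← prod_pow_eq_pow_sum, hcoeff, hz]
    simp only [colTerm, prod_mul_distrib, mul_pow, map_mul, map_prod, map_pow]
    ring
  · obtain ⟨j, hj⟩ := not_forall.1 hcols
    rw [not_le] at hj
    have hcol : ∏ j, colTerm u x z j (fun i => k i j) = 0 :=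
      prod_eq_zero (mem_univ j) (colTerm_eq_zero u z hj)
    have hpoch : ∏ j, poch (-(x j : ℝ)) (∑ i, k i j) = 0 :=
      prod_eq_zero (mem_univ j) (poch_neg_natCast_eq_zero hj)
    simp [matrixCoeff, hcol, hpoch]

theorem sum_multinomialCoeff_mul_P_eq_genFun (N : ℕ) (u : Fin n → Fin n → ℝ) {x : Fin n → ℕ}
    (hx : ∑ j, x j ≤ N) (z : Fin n → R) :
    ∑ m ∈ boundedTuples N n, multinomialCoeff N m * algebraMap ℝ R (P N u m x) * ∏ i, z i ^ m i =
      genFun N u x z := by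
  set box := Fintype.piFinset fun _ : Fin n => range (N + 1)
  have hvanish : ∀ k ∈ Fintype.piFinset (fun _ : Fin n => box), k ∉ boundedMatrices N n →
      ∏ j, colTerm u x z j (fun i => k i j) = 0 := by
    intro k hk hkN
    obtain ⟨j, hj⟩ : ∃ j, x j < ∑ i, k i j := by
      by_contra! hcols
      refine hkN (mem_filter.2 ⟨hk, ?_⟩)
      rw [sum_comm]
      exact (sum_le_sum fun j _ => hcols j).trans hx
    exact prod_eq_zero (mem_univ j) (colTerm_eq_zero u z hj)
  have htranspose : ∑ k ∈ Fintype.piFinset (fun _ : Fin n => box),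
      ∏ j, colTerm u x z j (fun i => k i j) =
        ∑ k ∈ Fintype.piFinset (fun _ : Fin n => box), ∏ j, colTerm u x z j (k j) := by
    refine sum_nbij' (fun k j i => k i j) (fun k i j => k j i) ?_ ?_ (fun _ _ => rfl)
      (fun _ _ => rfl) (fun _ _ => rfl) <;>
    · intro k hk
      simp only [Fintype.mem_piFinset, box] at hk ⊢
      exact fun a b => hk b a
  rw [sum_multinomialCoeff_mul_P_eq_sum_matrixCoeff,
    sum_congr rfl fun k _ => matrixTerm_eq_prod_colTerm u z hx k, ← mul_sum,
    sum_subset (s₁ := boundedMatrices N n) (filter_subset _ _) hvanish, htranspose,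
    ← prod_univ_sum, genFun, mul_comm]
  congr 1
  exact prod_congr rfl fun j _ =>
    sum_colTerm u z ((single_le_sum (fun i _ => (x i).zero_le) (mem_univ j)).trans hx)

theorem sum_bn_mul_genFun_mul_genFun (N : ℕ) (u : Fin n → Fin n → ℝ) (η : Fin n → ℝ)
    (h1 : ∀ r, ∑ j, η j * u r j = 1) (h2 : ∀ r s, r ≠ s → ∑ j, η j * u r j * u s j = 1)
    (z w : Fin n → R) :
    ∑ x ∈ boundedTuples N n, algebraMap ℝ R (bn N x η) * genFun N u x z * genFun N u x w =
      (1 + ∑ i, algebraMap ℝ R (∑ j, η j * u i j ^ 2 - 1) * (z i * w i)) ^ N := by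
  set φ := algebraMap ℝ R
  have h1' : ∀ r, ∑ j, φ (η j) * φ (u r j) = 1 := fun r => by
    simp only [← map_mul, ← map_sum, h1, map_one]
  have h2' : ∀ r s, r ≠ s → ∑ j, φ (η j) * φ (u r j) * φ (u s j) = 1 := fun r s hrs => by
    simp only [← map_mul, ← map_sum, h2 r s hrs, map_one]
  have hΔ : ∀ i, φ (∑ j, η j * u i j ^ 2 - 1) = ∑ j, φ (η j) * φ (u i j) ^ 2 - 1 := fun i => by
    simp only [map_sub, map_sum, map_mul, map_pow, map_one]
  simp only [hΔ]
  rw [← sum_mul_mul_add_eq_one_add_sum (fun j => φ (η j)) (fun i j => φ (u i j)) h1' h2',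
    add_pow_eq_sum_multinomialCoeff]
  refine sum_congr rfl fun x hx => ?_
  rw [bn_eq_multinomialCoeff_mul η (mem_boundedTuples.1 hx), genFun, genFun]
  simp only [map_mul, map_pow, map_prod, map_natCast, map_sub, map_one, map_sum, mul_pow,
    prod_mul_distrib]
  ring

theorem sum_sum_multinomialCoeff_mul_sum_bn_mul_P_mul_P (N : ℕ) (u : Fin n → Fin n → ℝ)
    (η : Fin n → ℝ) (h1 : ∀ r, ∑ j, η j * u r j = 1)
    (h2 : ∀ r s, r ≠ s → ∑ j, η j * u r j * u s j = 1) (z w : Fin n → R) :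
    ∑ m ∈ boundedTuples N n, ∑ m' ∈ boundedTuples N n,
        algebraMap ℝ R (multinomialCoeff N m * multinomialCoeff N m' *
          ∑ x ∈ boundedTuples N n, bn N x η * P N u m x * P N u m' x) *
        ((∏ i, z i ^ m i) * ∏ i, w i ^ m' i) =
      ∑ c ∈ boundedTuples N n, algebraMap ℝ R
          (multinomialCoeff N c * ∏ i, (∑ j, η j * u i j ^ 2 - 1) ^ c i) *
        ((∏ i, z i ^ c i) * ∏ i, w i ^ c i) := by
  have hexpand :
      ∑ x ∈ boundedTuples N n, algebraMap ℝ R (bn N x η) * genFun N u x z * genFun N u x w =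
      ∑ m ∈ boundedTuples N n, ∑ m' ∈ boundedTuples N n,
        algebraMap ℝ R (multinomialCoeff N m * multinomialCoeff N m' *
          ∑ x ∈ boundedTuples N n, bn N x η * P N u m x * P N u m' x) *
        ((∏ i, z i ^ m i) * ∏ i, w i ^ m' i) := by
    rw [sum_congr rfl fun x hx => by
      rw [← sum_multinomialCoeff_mul_P_eq_genFun N u (mem_boundedTuples.1 hx) z,
        ← sum_multinomialCoeff_mul_P_eq_genFun N u (mem_boundedTuples.1 hx) w]]
    simp only [mul_sum, sum_mul, map_sum, map_mul, map_natCast]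
    refine (sum_congr rfl fun x _ => sum_comm).trans <| sum_comm.trans <|
      sum_congr rfl fun m _ => sum_comm.trans <|
        sum_congr rfl fun m' _ => sum_congr rfl fun x _ => ?_
    ring
  rw [← hexpand, sum_bn_mul_genFun_mul_genFun N u η h1 h2, add_comm 1,
    add_pow_eq_sum_multinomialCoeff]
  refine sum_congr rfl fun c _ => ?_
  simp only [one_pow, mul_one, map_mul, map_natCast, map_prod, map_pow, mul_pow, prod_mul_distrib]
  ring

end GeneratingFunction

section Coefficients

open MvPolynomial

/-- The exponent of the monomial `zᵐ wᵐ'` in the variables `z = X ∘ inl`, `w = X ∘ inr`. -/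
noncomputable def pairExp (m m' : Fin n → ℕ) : Fin n ⊕ Fin n →₀ ℕ :=
  Finsupp.equivFunOnFinite.symm (Sum.elim m m')

lemma pairExp_inj {m m' μ μ' : Fin n → ℕ} : pairExp m m' = pairExp μ μ' ↔ m = μ ∧ m' = μ' := by
  rw [pairExp, pairExp, Equiv.apply_eq_iff_eq]
  refine ⟨fun h => ⟨funext fun i => congrFun h (.inl i), funext fun i => congrFun h (.inr i)⟩, ?_⟩
  rintro ⟨rfl, rfl⟩
  rfl

lemma prod_X_pow_mul_prod_X_pow (m m' : Fin n → ℕ) :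
    (∏ i, (X (.inl i) : MvPolynomial (Fin n ⊕ Fin n) ℝ) ^ m i) * ∏ i, X (.inr i) ^ m' i =
      monomial (pairExp m m') 1 := by
  rw [monomial_eq, C_1, one_mul, Finsupp.prod_fintype _ _ fun _ => pow_zero _,
    Fintype.prod_sum_type]
  rfl

theorem multinomialCoeff_mul_sum_bn_mul_P_mul_P (N : ℕ) (u : Fin n → Fin n → ℝ)
    (η : Fin n → ℝ) (h1 : ∀ r, ∑ j, η j * u r j = 1)
    (h2 : ∀ r s, r ≠ s → ∑ j, η j * u r j * u s j = 1) {m m' : Fin n → ℕ}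
    (hm : m ∈ boundedTuples N n) (hm' : m' ∈ boundedTuples N n) :
    multinomialCoeff N m * multinomialCoeff N m' *
        ∑ x ∈ boundedTuples N n, bn N x η * P N u m x * P N u m' x =
      if m = m' then multinomialCoeff N m * ∏ i, (∑ j, η j * u i j ^ 2 - 1) ^ m i else 0 := by
  have h := congrArg (coeff (pairExp m m'))
    (sum_sum_multinomialCoeff_mul_sum_bn_mul_P_mul_P N u η h1 h2
      (fun i => (X (.inl i) : MvPolynomial (Fin n ⊕ Fin n) ℝ)) (fun i => X (.inr i)))
  simp only [prod_X_pow_mul_prod_X_pow, algebraMap_eq, C_mul_monomial, mul_one, coeff_sum,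
    coeff_monomial, pairExp_inj] at h
  simpa [ite_and, hm, hm'] using h

end Coefficients

end Krawtchouk

open Krawtchouk

theorem stmt_11_general (N n : ℕ)
    (u : Fin n → Fin n → ℝ) (η : Fin n → ℝ)
    (h1 : ∀ r, ∑ j, η j * u r j = 1)
    (h2 : ∀ r s, r ≠ s → ∑ j, η j * u r j * u s j = 1) :
    ∀ m m' : Fin n → ℕ, ∑ k, m k ≤ N → ∑ k, m' k ≤ N →
      ∑ x ∈ Finset.filter (fun x => ∑ i, x i ≤ N)
          (Fintype.piFinset fun _ : Fin n => Finset.range (N + 1)),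
        bn N x η * P N u m x * P N u m' x
      = (if m = m' then (1 : ℝ) else 0) *
          ((∏ i, ((m i).factorial : ℝ)) * ((N - ∑ k, m k).factorial : ℝ) / (N.factorial : ℝ)) *
          ∏ j, ((∑ s, η s * u j s ^ 2) - 1) ^ m j := by
  intro m m' hm hm'
  change ∑ x ∈ boundedTuples N n, _ = _
  have h := multinomialCoeff_mul_sum_bn_mul_P_mul_P N u η h1 h2 (mem_boundedTuples.2 hm)
    (mem_boundedTuples.2 hm')
  have hpos : (0 : ℝ) < multinomialCoeff N m := by exact_mod_cast multinomialCoeff_pos N m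
  have hpos' : (0 : ℝ) < multinomialCoeff N m' := by exact_mod_cast multinomialCoeff_pos N m'
  split_ifs at h ⊢ with hmm
  · subst hmm
    have hspec : (multinomialCoeff N m : ℝ) * ((∏ i, ((m i).factorial : ℝ)) *
        ((N - ∑ i, m i).factorial : ℝ)) = N.factorial := by
      exact_mod_cast multinomialCoeff_spec hm
    have hS := mul_left_cancel₀ hpos.ne' ((mul_assoc _ _ _).symm.trans h)
    rw [← hspec, ← hS]
    field_simp
  · simpa [hpos.ne', hpos'.ne'] using h

/-- Orthogonality (4.16) of the multivariable Krawtchouk polynomials with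
respect to the multinomial weight, under conditions (3.4) and (4.11). -/
theorem stmt_11 (N n : ℕ) (hN : 1 ≤ N) (hn : 1 ≤ n)
    (u : Fin n → Fin n → ℝ) (η : Fin n → ℝ)
    (hη : ∀ j, 0 ≤ η j) (hηs : ∑ j, η j ≤ 1)
    (h1 : ∀ r, ∑ j, η j * u r j = 1)
    (h2 : ∀ r s, r ≠ s → ∑ j, η j * u r j * u s j = 1) :
    ∀ m m' : Fin n → ℕ, ∑ k, m k ≤ N → ∑ k, m' k ≤ N →
      ∑ x ∈ Finset.filter (fun x => ∑ i, x i ≤ N)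
          (Fintype.piFinset fun _ : Fin n => Finset.range (N + 1)),
        bn N x η * P N u m x * P N u m' x
      = (if m = m' then (1 : ℝ) else 0) *
          ((∏ i, ((m i).factorial : ℝ)) * ((N - ∑ k, m k).factorial : ℝ) / (N.factorial : ℝ)) *
          ∏ j, ((∑ s, η s * u j s ^ 2) - 1) ^ m j :=
  stmt_11_general N n u η h1 h2
end
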